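/- arXiv:2407.06142 — 8 statements merged into one kernel-verified Lean document; each statement's English description precedes it below -/
import Mathlib

section
/- Let A be a real q×p matrix, v ∈ ℝ^q, ψ a real q×s matrix, z ∈ {0,1}^s, u ∈ ℝ^p and b ∈ ℝ, and suppose U(z) is nonempty. Then ζᵀu ≤ b holds for every ζ ∈ U(z) if and only if there exist a constant M > 0, a vector π ∈ ℝ^q and a matrix y ∈ ℝ^{q×s} such that Aᵀπ = u, π ≥ 0, Σ_i π_i v_i + Σ_{i,j} ψ_{i,j} y_{i,j} ≤ b, and for all i ∈ {1,…,q}, j ∈ {1,…,s}: y_{i,j} ≤ π_i, y_{i,j} ≤ M z_j, y_{i,j} ≥ π_i − M(1 − z_j), and y_{i,j} ≥ 0. -/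
open Matrix Finset

/-- Homogeneous Farkas lemma, by induction on the number of rows. -/
lemma farkas_aux : ∀ (q : ℕ) {p : ℕ} (a : Fin q → (Fin p → ℝ)) (u : Fin p → ℝ),
    (∀ x : Fin p → ℝ, (∀ i, a i ⬝ᵥ x ≤ 0) → u ⬝ᵥ x ≤ 0) →
    ∃ π : Fin q → ℝ, (∀ i, 0 ≤ π i) ∧ u = ∑ i, π i • a i := by
  intro q
  induction q with
  | zero =>
    intro p a u h
    have hu : u = 0 := by
      have h0 : u ⬝ᵥ u ≤ 0 := h u (fun i => i.elim0)
      have h1 : (0:ℝ) ≤ u ⬝ᵥ u := Finset.sum_nonneg fun k _ => mul_self_nonneg _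
      exact dotProduct_self_eq_zero.mp (le_antisymm h0 h1)
    exact ⟨fun i => 0, fun i => le_rfl, by simp [hu]⟩
  | succ q ih =>
    intro p a u h
    by_cases hq : ∀ x : Fin p → ℝ, (∀ i : Fin q, a i.succ ⬝ᵥ x ≤ 0) → u ⬝ᵥ x ≤ 0
    · obtain ⟨π, hπ, hu⟩ := ih (fun i => a i.succ) u hq
      refine ⟨Fin.cons 0 π, ?_, ?_⟩
      · intro i
        induction i using Fin.cases with
        | zero => simp
        | succ i => simpa using hπ i
      · rw [Fin.sum_univ_succ]
        simpa using hu
    · push_neg at hq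
      obtain ⟨x0, hx0, hux0⟩ := hq
      set α : ℝ := a 0 ⬝ᵥ x0 with hα
      have hαpos : 0 < α := by
        by_contra hc
        push_neg at hc
        have : u ⬝ᵥ x0 ≤ 0 := by
          apply h
          intro i
          induction i using Fin.cases with
          | zero => exact hc
          | succ i => exact hx0 i
        linarith
      have hαne : α ≠ 0 := ne_of_gt hαpos
      -- projected vectors
      set a' : Fin q → (Fin p → ℝ) := fun i => a i.succ - (a i.succ ⬝ᵥ x0 / α) • a 0 with ha'
      set u' : Fin p → ℝ := u - (u ⬝ᵥ x0 / α) • a 0 with hu'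
      -- key symmetry
      have key : ∀ (w x : Fin p → ℝ),
          (w - (w ⬝ᵥ x0 / α) • a 0) ⬝ᵥ x = w ⬝ᵥ (x - (a 0 ⬝ᵥ x / α) • x0) := by
        intro w x
        rw [sub_dotProduct, smul_dotProduct, dotProduct_sub, dotProduct_smul]
        simp only [smul_eq_mul]
        ring
      have hprem : ∀ x : Fin p → ℝ, (∀ i : Fin q, a' i ⬝ᵥ x ≤ 0) → u' ⬝ᵥ x ≤ 0 := by
        intro x hx
        rw [hu', key]
        apply h
        intro i
        induction i using Fin.cases with
        | zero =>
          rw [dotProduct_sub, dotProduct_smul, smul_eq_mul]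
          rw [div_mul_eq_mul_div, mul_div_assoc, div_self hαne]
          simp
        | succ i =>
          rw [← key]
          exact hx i
      obtain ⟨lam, hlam, hulam⟩ := ih a' u' hprem
      set μ : ℝ := (u ⬝ᵥ x0 - ∑ i, lam i * (a i.succ ⬝ᵥ x0)) / α with hμ
      have hμ0 : 0 ≤ μ := by
        apply div_nonneg _ (le_of_lt hαpos)
        have : ∑ i, lam i * (a i.succ ⬝ᵥ x0) ≤ 0 :=
          Finset.sum_nonpos fun i _ => mul_nonpos_of_nonneg_of_nonpos (hlam i) (hx0 i)
        linarith
      refine ⟨Fin.cons μ lam, ?_, ?_⟩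
      · intro i
        induction i using Fin.cases with
        | zero => simpa using hμ0
        | succ i => simpa using hlam i
      · rw [Fin.sum_univ_succ]
        simp only [Fin.cons_zero, Fin.cons_succ]
        have expand : ∑ i, lam i • a' i
            = ∑ i, lam i • a i.succ - (∑ i, lam i * (a i.succ ⬝ᵥ x0 / α)) • a 0 := by
          rw [Finset.sum_smul, ← Finset.sum_sub_distrib]
          refine Finset.sum_congr rfl fun i _ => ?_
          simp [ha', smul_sub, smul_smul]
        have := hulam
        rw [expand, hu'] at this
        have hcoef : μ = u ⬝ᵥ x0 / α - ∑ i, lam i * (a i.succ ⬝ᵥ x0 / α) := by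
          rw [hμ, sub_div, Finset.sum_div]
          congr 1
          exact Finset.sum_congr rfl fun i _ => by ring
        have : u = (u ⬝ᵥ x0 / α) • a 0 + (∑ i, lam i • a i.succ
            - (∑ i, lam i * (a i.succ ⬝ᵥ x0 / α)) • a 0) := by
          rw [← this]; abel
        rw [this, hcoef]
        module

/-- Affine Farkas lemma / LP weak-strong duality consequence. -/
lemma farkas_affine {q p : ℕ} (A : Matrix (Fin q) (Fin p) ℝ) (c : Fin q → ℝ)
    (u : Fin p → ℝ) (b : ℝ)
    (hne : ∃ ζ : Fin p → ℝ, ∀ i, A i ⬝ᵥ ζ ≤ c i)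
    (h : ∀ ζ : Fin p → ℝ, (∀ i, A i ⬝ᵥ ζ ≤ c i) → u ⬝ᵥ ζ ≤ b) :
    ∃ π : Fin q → ℝ, (∀ i, 0 ≤ π i) ∧ (∀ j, ∑ i, A i j * π i = u j) ∧
      ∑ i, π i * c i ≤ b := by
  obtain ⟨ζ0, hζ0⟩ := hne
  -- augmented rows in ℝ^(p+1): coordinate 0 is the homogenization variable
  set a : Fin (q + 1) → (Fin (p + 1) → ℝ) :=
    Fin.cons (Fin.cons (-1) 0) (fun i => Fin.cons (-(c i)) (A i)) with ha
  have hdot0 : ∀ x : Fin (p+1) → ℝ, a 0 ⬝ᵥ x = -(x 0) := by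
    intro x
    simp [ha, dotProduct, Fin.sum_univ_succ]
  have hdots : ∀ (i : Fin q) (x : Fin (p+1) → ℝ),
      a i.succ ⬝ᵥ x = -(c i) * x 0 + A i ⬝ᵥ (x ∘ Fin.succ) := by
    intro i x
    simp [ha, dotProduct, Fin.sum_univ_succ, Function.comp]
  have hmain : ∀ x : Fin (p+1) → ℝ, (∀ i, a i ⬝ᵥ x ≤ 0) →
      (Fin.cons (-b) u : Fin (p+1) → ℝ) ⬝ᵥ x ≤ 0 := by
    intro x hx
    have ht : 0 ≤ x 0 := by have := hx 0; rw [hdot0] at this; linarith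
    set t := x 0
    set ζ : Fin p → ℝ := x ∘ Fin.succ with hζ
    have hA : ∀ i, A i ⬝ᵥ ζ ≤ c i * t := by
      intro i
      have := hx i.succ
      rw [hdots] at this
      linarith
    have hgoal : (Fin.cons (-b) u : Fin (p+1) → ℝ) ⬝ᵥ x = -b * t + u ⬝ᵥ ζ := by
      simp [dotProduct, Fin.sum_univ_succ, hζ, Function.comp, t]
    rw [hgoal]
    rcases eq_or_lt_of_le ht with hteq | htpos
    · -- t = 0
      have ht0 : t = 0 := hteq.symm
      have hA0 : ∀ i, A i ⬝ᵥ ζ ≤ 0 := fun i => by have := hA i; rw [ht0] at this; simpa using this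
      have huζ : u ⬝ᵥ ζ ≤ 0 := by
        by_contra hc
        push_neg at hc
        set s : ℝ := max 0 ((b + 1 - u ⬝ᵥ ζ0) / (u ⬝ᵥ ζ)) with hs
        have hs0 : 0 ≤ s := le_max_left _ _
        have hfeas : ∀ i, A i ⬝ᵥ (ζ0 + s • ζ) ≤ c i := by
          intro i
          rw [dotProduct_add, dotProduct_smul, smul_eq_mul]
          have : s * (A i ⬝ᵥ ζ) ≤ 0 := mul_nonpos_of_nonneg_of_nonpos hs0 (hA0 i)
          have := hζ0 i
          linarith
        have hb := h _ hfeas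
        rw [dotProduct_add, dotProduct_smul, smul_eq_mul] at hb
        have hs1 : (b + 1 - u ⬝ᵥ ζ0) / (u ⬝ᵥ ζ) ≤ s := le_max_right _ _
        have : b + 1 - u ⬝ᵥ ζ0 ≤ s * (u ⬝ᵥ ζ) := by
          rw [← div_le_iff₀ hc] at *
          linarith [hs1]
        linarith
      rw [ht0]
      linarith
    · -- t > 0
      have hfeas : ∀ i, A i ⬝ᵥ (t⁻¹ • ζ) ≤ c i := by
        intro i
        rw [dotProduct_smul, smul_eq_mul]
        rw [inv_mul_le_iff₀ htpos]
        calc A i ⬝ᵥ ζ ≤ c i * t := hA i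
        _ = t * c i := by ring
      have hb := h _ hfeas
      rw [dotProduct_smul, smul_eq_mul, inv_mul_le_iff₀ htpos] at hb
      nlinarith
  obtain ⟨πh, hπh, hueq⟩ := farkas_aux (q+1) a (Fin.cons (-b) u) hmain
  refine ⟨fun i => πh i.succ, fun i => hπh i.succ, ?_, ?_⟩
  · intro j
    have := congrFun hueq j.succ
    simp only [Finset.sum_apply, Pi.smul_apply, smul_eq_mul] at this
    rw [Fin.sum_univ_succ] at this
    simp only [ha, Fin.cons_succ, Fin.cons_zero, Pi.zero_apply] at this
    rw [this]
    simp [mul_comm]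
  · have := congrFun hueq 0
    simp only [Finset.sum_apply, Pi.smul_apply, smul_eq_mul] at this
    rw [Fin.sum_univ_succ] at this
    simp only [ha, Fin.cons_zero, Fin.cons_succ] at this
    have h0 : πh 0 * (-1) + ∑ i : Fin q, πh i.succ * (-(c i)) = -b := this.symm
    have hsum : ∑ i : Fin q, πh i.succ * c i = b - πh 0 := by
      have : ∑ i : Fin q, πh i.succ * (-(c i)) = -∑ i : Fin q, πh i.succ * c i := by
        rw [← Finset.sum_neg_distrib]
        exact Finset.sum_congr rfl fun i _ => by ring
      rw [this] at h0
      linarith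
    have := hπh 0
    linarith [hsum.le]

/-- Big-M (McCormick) exact robust counterpart of the robust constraint
`ζᵀu ≤ b` for all `ζ` in the decision-dependent uncertainty set
`U(z) = {ζ : A ζ ≤ v + ψ z}` with binary `z`. -/
theorem stmt_0 (q p s : ℕ) (A : Matrix (Fin q) (Fin p) ℝ) (v : Fin q → ℝ)
    (ψ : Matrix (Fin q) (Fin s) ℝ) (z : Fin s → ℝ) (u : Fin p → ℝ) (b : ℝ)
    (hz : ∀ j, z j = 0 ∨ z j = 1)
    (hne : ∃ ζ : Fin p → ℝ, ∀ i, A.mulVec ζ i ≤ v i + ψ.mulVec z i) :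
    (∀ ζ : Fin p → ℝ, (∀ i, A.mulVec ζ i ≤ v i + ψ.mulVec z i) →
        ∑ k, ζ k * u k ≤ b) ↔
      (∃ M : ℝ, 0 < M ∧ ∃ π : Fin q → ℝ, ∃ y : Matrix (Fin q) (Fin s) ℝ,
        (∀ j, ∑ i, A i j * π i = u j) ∧ (∀ i, 0 ≤ π i) ∧
        (∑ i, π i * v i + ∑ i, ∑ j, ψ i j * y i j ≤ b) ∧
        (∀ i j, y i j ≤ π i ∧ y i j ≤ M * z j ∧
          π i - M * (1 - z j) ≤ y i j ∧ 0 ≤ y i j)) := by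
  set c : Fin q → ℝ := fun i => v i + ψ.mulVec z i with hc
  -- key sum identity : π ⬝ c = π ⬝ v + ∑∑ ψ i j * (π i * z j)
  have hsplit : ∀ π : Fin q → ℝ,
      ∑ i, π i * c i = ∑ i, π i * v i + ∑ i, ∑ j, ψ i j * (π i * z j) := by
    intro π
    rw [← Finset.sum_add_distrib]
    refine Finset.sum_congr rfl fun i _ => ?_
    rw [hc]
    simp only [Matrix.mulVec, dotProduct]
    rw [mul_add, Finset.mul_sum]
    congr 1
    exact Finset.sum_congr rfl fun j _ => by ring
  constructor
  · intro h
    obtain ⟨π, hπ0, hAπ, hπc⟩ := farkas_affine A c u b hne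
      (fun ζ hζ => by
        have := h ζ hζ
        rw [dotProduct_comm]
        simpa [dotProduct] using this)
    set M : ℝ := 1 + ∑ i, |π i| with hM
    have hMpos : 0 < M := by
      have : (0:ℝ) ≤ ∑ i, |π i| := Finset.sum_nonneg fun i _ => abs_nonneg _
      rw [hM]; linarith
    have hπM : ∀ i, π i ≤ M := by
      intro i
      have h1 : π i ≤ |π i| := le_abs_self _
      have h2 : |π i| ≤ ∑ k, |π k| :=
        Finset.single_le_sum (fun k _ => abs_nonneg (π k)) (Finset.mem_univ i)
      rw [hM]; linarith
    refine ⟨M, hMpos, π, Matrix.of fun i j => π i * z j, hAπ, hπ0, ?_, ?_⟩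
    · simp only [Matrix.of_apply]
      rw [← hsplit π]
      exact hπc
    · intro i j
      rcases hz j with h0 | h1
      · simp only [Matrix.of_apply, h0]
        refine ⟨by simpa using hπ0 i, by simp, by simp; linarith [hπM i], by simp⟩
      · simp only [Matrix.of_apply, h1]
        exact ⟨by simp, by simpa using hπM i, by simp, by simpa using hπ0 i⟩
  · rintro ⟨M, hM, π, y, hAπ, hπ0, hsum, hy⟩
    intro ζ hζ
    -- y i j = π i * z j
    have hyeq : ∀ i j, y i j = π i * z j := by
      intro i j
      obtain ⟨h1, h2, h3, h4⟩ := hy i j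
      rcases hz j with h0 | hone
      · rw [h0] at h2 ⊢
        simp only [mul_zero] at h2 ⊢
        linarith
      · rw [hone] at h3 ⊢
        simp only [mul_one] at h3 ⊢
        simp only [sub_self, mul_zero, sub_zero] at h3
        linarith
    have hval : ∑ k, ζ k * u k = ∑ i, π i * A.mulVec ζ i := by
      calc ∑ k, ζ k * u k = ∑ k, ∑ i, ζ k * (A i k * π i) := by
            refine Finset.sum_congr rfl fun k _ => ?_
            rw [← hAπ k, Finset.mul_sum]
        _ = ∑ i, ∑ k, ζ k * (A i k * π i) := Finset.sum_comm
        _ = ∑ i, π i * A.mulVec ζ i := by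
            refine Finset.sum_congr rfl fun i _ => ?_
            simp only [Matrix.mulVec, dotProduct, Finset.mul_sum]
            exact Finset.sum_congr rfl fun k _ => by ring
    have hle : ∑ i, π i * A.mulVec ζ i ≤ ∑ i, π i * c i :=
      Finset.sum_le_sum fun i _ => mul_le_mul_of_nonneg_left (hζ i) (hπ0 i)
    have : ∑ i, π i * c i ≤ b := by
      rw [hsplit π]
      calc ∑ i, π i * v i + ∑ i, ∑ j, ψ i j * (π i * z j)
          = ∑ i, π i * v i + ∑ i, ∑ j, ψ i j * y i j := by
            congr 1
            exact Finset.sum_congr rfl fun i _ => Finset.sum_congr rfl fun j _ =>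
              by rw [hyeq i j]
        _ ≤ b := hsum
    linarith [hval ▸ hle]
end

section
/- Let A be a real q×p matrix, v ∈ ℝ^q, ψ a real q×s matrix, z ∈ {0,1}^s, u ∈ ℝ^p and b ∈ ℝ, and suppose U(z) is nonempty. Then ζᵀu ≤ b holds for every ζ ∈ U(z) if and only if there exist a constant M > 0, a vector π ∈ ℝ^q with π ≥ 0 and Aᵀπ = u, real numbers y_{i,j} ≥ 0 for all pairs (i,j) with ψ_{i,j} ≥ 0, and real numbers w_{i,j} ≥ 0 for all pairs (i,j) with ψ_{i,j} < 0, such that: Σ_i π_i (v_i + Σ_{j : ψ_{i,j} < 0} ψ_{i,j}) + Σ_{i,j : ψ_{i,j} ≥ 0} ψ_{i,j} y_{i,j} − Σ_{i,j : ψ_{i,j} < 0} ψ_{i,j} w_{i,j} ≤ b; y_{i,j} ≥ π_i − M(1 − z_j) for all (i,j) with ψ_{i,j} ≥ 0; and w_{i,j} ≥ π_i − M z_j for all (i,j) with ψ_{i,j} < 0. -/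
/-!
By LP duality the robust constraint holds on the nonempty polyhedron `U(z)` iff there is a dual
certificate `π ≥ 0` with `Aᵀ π = u` and `πᵀ (v + ψ z) ≤ b`. Duality is the affine Farkas lemma,
obtained by homogenizing and separating `(u, b)` from a finitely generated cone, which is closed
by Carathéodory's theorem for cones. For binary `z` the bilinear terms `π i * z j` are then
linearized exactly: `y = π z` on the entries `ψ ≥ 0` and `w = π (1 - z)` on the entries `ψ < 0`,
with `M = ∑ π + 1`; conversely the Big-M constraints force, entry by entry,
`ψ i j * y i j ≥ ψ i j * π i * z j` and `ψ i j * (π i - w i j) ≥ ψ i j * π i * z j`.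
-/

open Finset Function Matrix PointedCone

section FinitelyGeneratedCone

variable {ι E : Type*} [Fintype ι] [AddCommGroup E] [Module ℝ E]

lemma exists_nonneg_sub_smul_eq_zero {l d : ι → ℝ} (hl : 0 ≤ l) (hd : d ≠ 0) :
    ∃ t : ℝ, 0 ≤ l - t • d ∧ ∃ i, d i ≠ 0 ∧ l i - t * d i = 0 := by
  wlog hpos : ∃ i, 0 < d i generalizing d
  · obtain ⟨i, hi⟩ : ∃ i, d i ≠ 0 := by simpa [funext_iff] using hd
    obtain ⟨t, ht, j, hj, hlj⟩ := this (d := -d) (neg_ne_zero.mpr hd)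
      ⟨i, by simp only [not_exists, not_lt] at hpos; simpa using (hpos i).lt_of_ne hi⟩
    exact ⟨-t, by simpa using ht, j, by simpa using hj, by simpa using hlj⟩
  obtain ⟨i₀, hi₀, hmin⟩ := exists_min_image {i | 0 < d i} (fun i => l i / d i)
    (by simpa [Finset.Nonempty] using hpos)
  rw [mem_filter_univ] at hi₀
  refine ⟨l i₀ / d i₀, fun i => ?_, i₀, hi₀.ne', by field_simp; ring⟩
  rcases le_or_gt (d i) 0 with hdi | hdi
  · have := mul_nonpos_of_nonneg_of_nonpos (div_nonneg (hl i₀) hi₀.le) hdi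
    simp only [Pi.zero_apply, Pi.sub_apply, Pi.smul_apply, smul_eq_mul, sub_nonneg]
    linarith [show 0 ≤ l i from hl i]
  · have := hmin i (by simpa using hdi)
    rw [div_le_div_iff₀ hi₀ hdi] at this
    simp only [Pi.zero_apply, Pi.sub_apply, Pi.smul_apply, smul_eq_mul, sub_nonneg]
    rw [div_mul_eq_mul_div, div_le_iff₀ hi₀]
    linarith

lemma exists_nonneg_support_ssubset_of_not_linearIndepOn (g : ι → E) {l : ι → ℝ} (hl : 0 ≤ l)
    (h : ¬LinearIndepOn ℝ g (support l)) :
    ∃ μ : ι → ℝ, 0 ≤ μ ∧ support μ ⊂ support l ∧ ∑ i, μ i • g i = ∑ i, l i • g i := by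
  classical
  simp only [linearIndepOn_iff'', not_forall, exists_prop] at h
  obtain ⟨t, d, hts, hdt, hrel, j, -, hdj⟩ := h
  have hd_supp : ∀ i, l i = 0 → d i = 0 := fun i hli =>
    hdt i fun hit => hts hit hli
  have hrel' : ∑ i, d i • g i = 0 := by
    rw [← hrel]
    exact (sum_subset (subset_univ t) fun i _ hit => by simp [hdt i hit]).symm
  obtain ⟨c, hc, i₀, hdi₀, hli₀⟩ :=
    exists_nonneg_sub_smul_eq_zero hl (d := d) fun h => hdj (congrFun h j)
  refine ⟨l - c • d, hc, ?_, ?_⟩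
  · refine (Set.ssubset_iff_of_subset fun i hi => ?_).mpr ⟨i₀, ?_, ?_⟩
    · rw [mem_support] at hi ⊢
      contrapose! hi
      simp [hi, hd_supp i hi]
    · exact fun h => hdi₀ (hd_supp i₀ h)
    · simpa using hli₀
  · simp [sub_smul, sum_sub_distrib, mul_smul, ← smul_sum, hrel']

/-- Carathéodory's theorem for cones. -/
theorem exists_nonneg_linearIndepOn_support (g : ι → E) {l : ι → ℝ} (hl : 0 ≤ l) :
    ∃ μ : ι → ℝ, 0 ≤ μ ∧ LinearIndepOn ℝ g (support μ) ∧ ∑ i, μ i • g i = ∑ i, l i • g i := by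
  induction hn : (support l).ncard using Nat.strong_induction_on generalizing l with
  | _ n ih =>
  by_cases h : LinearIndepOn ℝ g (support l)
  · exact ⟨l, hl, h, rfl⟩
  obtain ⟨μ, hμ, hsub, hsum⟩ := exists_nonneg_support_ssubset_of_not_linearIndepOn g hl h
  obtain ⟨ν, hν, hind, hνsum⟩ :=
    ih _ (hn ▸ Set.ncard_lt_ncard hsub (Set.toFinite _)) hμ rfl
  exact ⟨ν, hν, hind, hνsum.trans hsum⟩

variable [TopologicalSpace E] [IsTopologicalAddGroup E] [ContinuousSMul ℝ E]

lemma LinearIndependent.isClosed_linearCombination_image_Ici [T2Space E] {g : ι → E}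
    (hg : LinearIndependent ℝ g) : IsClosed (Fintype.linearCombination ℝ g '' Set.Ici 0) :=
  (LinearMap.isClosedEmbedding_of_injective (LinearMap.ker_eq_bot.mpr
    (linearIndependent_iff_injective_fintypeLinearCombination.mp hg))).isClosedMap _ isClosed_Ici

theorem isClosed_linearCombination_image_Ici [T2Space E] (g : ι → E) :
    IsClosed (Fintype.linearCombination ℝ g '' Set.Ici 0) := by
  classical
  suffices h : Fintype.linearCombination ℝ g '' Set.Ici 0 =
      ⋃ (s : Finset ι) (_ : LinearIndepOn ℝ g s),
        Fintype.linearCombination ℝ (fun i : s => g i) '' Set.Ici 0 by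
    rw [h]
    exact isClosed_iUnion_of_finite fun s => isClosed_iUnion_of_finite fun hs =>
      hs.isClosed_linearCombination_image_Ici
  ext x
  simp only [Fintype.linearCombination_apply, Set.mem_iUnion, Set.mem_image, Set.mem_Ici,
    exists_prop]
  constructor
  · rintro ⟨l, hl, rfl⟩
    obtain ⟨μ, hμ, hind, hsum⟩ := exists_nonneg_linearIndepOn_support g hl
    refine ⟨(support μ).toFinset, by simpa using hind, fun i => μ i, fun i => hμ i, ?_⟩
    rw [← hsum, sum_coe_sort (support μ).toFinset (fun i => μ i • g i)]
    exact sum_subset (subset_univ _) fun i _ hi => by simp_all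
  · rintro ⟨s, -, μ, hμ, rfl⟩
    refine ⟨fun i => if h : i ∈ s then μ ⟨i, h⟩ else 0, fun i => ?_, ?_⟩
    · by_cases h : i ∈ s
      · simpa [h] using hμ ⟨i, h⟩
      · simp [h]
    · rw [← sum_subset (subset_univ s) fun i _ hi => by simp [hi], ← sum_coe_sort s]
      exact sum_congr rfl fun i _ => by simp

/-- Farkas' lemma for finitely generated cones. -/
theorem exists_strongDual_nonneg_of_notMem [T2Space E] [LocallyConvexSpace ℝ E] (g : ι → E)
    {x : E} (hx : x ∉ Fintype.linearCombination ℝ g '' Set.Ici 0) :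
    ∃ φ : StrongDual ℝ E, (∀ i, 0 ≤ φ (g i)) ∧ φ x < 0 := by
  classical
  obtain ⟨φ, hφ, hφx⟩ :=
    ProperCone.hyperplane_separation_point
      ⟨(positive ℝ (ι → ℝ)).map (Fintype.linearCombination ℝ g),
        isClosed_linearCombination_image_Ici g⟩ hx
  exact ⟨φ, fun i => hφ _ ⟨Pi.single i 1, Pi.single_nonneg.mpr zero_le_one, by simp⟩, hφx⟩

end FinitelyGeneratedCone

namespace Matrix

variable {m n : Type*} [Fintype n]

theorem exists_nonneg_vecMul_eq_or_exists_mulVec_nonneg [Fintype m] (G : Matrix m n ℝ)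
    (x : n → ℝ) :
    (∃ l, 0 ≤ l ∧ l ᵥ* G = x) ∨ ∃ y, 0 ≤ G *ᵥ y ∧ x ⬝ᵥ y < 0 := by
  classical
  by_cases hx : x ∈ Fintype.linearCombination ℝ (fun i => G i) '' Set.Ici 0
  · obtain ⟨l, hl, rfl⟩ := hx
    exact .inl ⟨l, hl, by rw [vecMul_eq_sum]; rfl⟩
  obtain ⟨φ, hφ, hφx⟩ := exists_strongDual_nonneg_of_notMem _ hx
  set y : n → ℝ := fun j => φ fun k => if j = k then 1 else 0
  have hφy (w : n → ℝ) : φ w = w ⬝ᵥ y := by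
    simpa [dotProduct] using LinearMap.pi_apply_eq_sum_univ (φ : (n → ℝ) →ₗ[ℝ] ℝ) w
  refine .inr ⟨y, fun i => ?_, by rwa [← hφy]⟩
  simpa [mulVec, hφy] using hφ i

variable (A : Matrix m n ℝ) {c : m → ℝ} {u : n → ℝ} {b : ℝ}

theorem dotProduct_le_dotProduct_of_transpose_mulVec_eq [Fintype m] {π : m → ℝ} {ζ : n → ℝ}
    (hπ : 0 ≤ π) (hAπ : Aᵀ *ᵥ π = u) (hζ : A *ᵥ ζ ≤ c) : ζ ⬝ᵥ u ≤ π ⬝ᵥ c := by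
  rw [← hAπ, dotProduct_mulVec, vecMul_transpose, dotProduct_comm]
  exact dotProduct_le_dotProduct_of_nonneg_left hζ hπ

variable {A}

lemma dotProduct_nonpos_of_mulVec_nonpos (hne : ∃ ζ, A *ᵥ ζ ≤ c)
    (hbdd : ∀ ζ, A *ᵥ ζ ≤ c → ζ ⬝ᵥ u ≤ b) {d : n → ℝ} (hd : A *ᵥ d ≤ 0) : d ⬝ᵥ u ≤ 0 := by
  obtain ⟨ζ₀, hζ₀⟩ := hne
  by_contra! hpos
  -- The step length that pushes the objective along `d` from `ζ₀ ⬝ᵥ u` up to `b + 1`.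
  have ht : 0 ≤ (b - ζ₀ ⬝ᵥ u + 1) / (d ⬝ᵥ u) := by
    have := hbdd ζ₀ hζ₀
    positivity
  have := hbdd (ζ₀ + ((b - ζ₀ ⬝ᵥ u + 1) / (d ⬝ᵥ u)) • d) <| by
    rw [mulVec_add, mulVec_smul]
    exact (add_le_of_le_of_nonpos le_rfl (smul_nonpos_of_nonneg_of_nonpos ht hd)).trans hζ₀
  rw [add_dotProduct, smul_dotProduct, smul_eq_mul, div_mul_cancel₀ _ hpos.ne'] at this
  linarith

lemma dotProduct_le_mul_of_mulVec_le_smul (hne : ∃ ζ, A *ᵥ ζ ≤ c)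
    (hbdd : ∀ ζ, A *ᵥ ζ ≤ c → ζ ⬝ᵥ u ≤ b) {d : n → ℝ} {r : ℝ} (hr : 0 ≤ r)
    (hd : A *ᵥ d ≤ r • c) : d ⬝ᵥ u ≤ r * b := by
  rcases hr.eq_or_lt with rfl | hr
  · simpa using dotProduct_nonpos_of_mulVec_nonpos hne hbdd (by simpa using hd)
  have := hbdd (r⁻¹ • d) <| by
    rw [mulVec_smul, ← inv_smul_smul₀ hr.ne' c]
    exact smul_le_smul_of_nonneg_left hd (inv_nonneg.mpr hr.le)
  rwa [smul_dotProduct, smul_eq_mul, inv_mul_le_iff₀ hr] at this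

/-- Affine Farkas lemma. -/
theorem exists_nonneg_transpose_mulVec_eq [Fintype m] (hne : ∃ ζ, A *ᵥ ζ ≤ c)
    (hbdd : ∀ ζ, A *ᵥ ζ ≤ c → ζ ⬝ᵥ u ≤ b) :
    ∃ π, 0 ≤ π ∧ Aᵀ *ᵥ π = u ∧ π ⬝ᵥ c ≤ b := by
  -- Homogenize: the cone is generated by the rows `(A i, c i)` and the slack row `(0, 1)`.
  rcases exists_nonneg_vecMul_eq_or_exists_mulVec_nonneg
      (fromBlocks A (replicateCol Unit c) 0 (1 : Matrix Unit Unit ℝ)) (Sum.elim u fun _ => b) with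
    ⟨l, hl, hlG⟩ | ⟨y, hy, hyx⟩
  · rw [← Sum.elim_comp_inl_inr l, vecMul_fromBlocks] at hlG
    refine ⟨l ∘ Sum.inl, fun i => hl _, funext fun j => ?_, ?_⟩
    · simpa [mulVec_transpose] using congrFun hlG (.inl j)
    · have := congrFun hlG (.inr ())
      simp only [Sum.elim_comp_inl_inr, vecMul_zero, add_zero, mulVec_replicateCol_eq_const,
        vecMul_one, Sum.elim_inr, Pi.add_apply, const_apply, Function.comp_apply] at this
      linarith [show 0 ≤ l (.inr ()) from hl _]
  · rw [← Sum.elim_comp_inl_inr y, fromBlocks_mulVec] at hy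
    have hbound := dotProduct_le_mul_of_mulVec_le_smul hne hbdd (d := -(y ∘ Sum.inl))
      (r := y (.inr ())) (by simpa using hy (.inr ())) fun i => by
        simpa [mulVec_neg, neg_le_iff_add_nonneg, mulVec, dotProduct, mul_comm, add_comm]
          using hy (.inl i)
    simp only [dotProduct, mul_comm, Fintype.sum_sum_type, Sum.elim_inl, univ_unique,
      PUnit.default_eq_unit, Sum.elim_inr, sum_singleton, Pi.neg_apply, Function.comp_apply,
      mul_neg, sum_neg_distrib] at hyx hbound
    linarith

theorem forall_dotProduct_le_iff [Fintype m] (hne : ∃ ζ, A *ᵥ ζ ≤ c) :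
    (∀ ζ, A *ᵥ ζ ≤ c → ζ ⬝ᵥ u ≤ b) ↔ ∃ π, 0 ≤ π ∧ Aᵀ *ᵥ π = u ∧ π ⬝ᵥ c ≤ b :=
  ⟨exists_nonneg_transpose_mulVec_eq hne, fun ⟨_, hπ, hAπ, hb⟩ _ hζ =>
    (dotProduct_le_dotProduct_of_transpose_mulVec_eq A hπ hAπ hζ).trans hb⟩

end Matrix

section BigM

variable {m n : Type*} [Fintype m] [Fintype n]

/-- The left-hand side of the sign-split Big-M certificate: `y i j` stands for `π i * z j` where
`ψ i j ≥ 0`, and `w i j` for `π i * (1 - z j)` where `ψ i j < 0`. -/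
noncomputable def signSplitBound (ψ : Matrix m n ℝ) (v π : m → ℝ) (y w : Matrix m n ℝ) : ℝ :=
  ∑ i, π i * (v i + ∑ j ∈ univ.filter (fun j => ψ i j < 0), ψ i j)
    + ∑ i, ∑ j ∈ univ.filter (fun j => 0 ≤ ψ i j), ψ i j * y i j
    - ∑ i, ∑ j ∈ univ.filter (fun j => ψ i j < 0), ψ i j * w i j

lemma signSplitBound_eq (ψ : Matrix m n ℝ) (v π : m → ℝ) (y w : Matrix m n ℝ) :
    signSplitBound ψ v π y w =
      π ⬝ᵥ v + ∑ i, ∑ j, if 0 ≤ ψ i j then ψ i j * y i j else ψ i j * (π i - w i j) := by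
  simp only [signSplitBound, dotProduct, sum_filter, mul_add, mul_sum, ← sum_add_distrib,
    ← sum_sub_distrib]
  refine sum_congr rfl fun i _ => ?_
  rw [add_assoc, add_sub_assoc, ← sum_add_distrib, ← sum_sub_distrib]
  congr 1
  refine sum_congr rfl fun j _ => ?_
  by_cases h : 0 ≤ ψ i j
  · simp [h, not_lt.mpr h]
  · simp only [h, not_le.mp h, ↓reduceIte, add_zero]
    ring

lemma dotProduct_add_mulVec_eq_sum (ψ : Matrix m n ℝ) (v π : m → ℝ) (z : n → ℝ) :
    π ⬝ᵥ (v + ψ *ᵥ z) = π ⬝ᵥ v + ∑ i, ∑ j, ψ i j * (π i * z j) := by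
  rw [dotProduct_add]
  congr 1
  simp only [dotProduct, mulVec, mul_sum]
  exact sum_congr rfl fun i _ => sum_congr rfl fun j _ => by ring

lemma mul_mul_le_ite_of_bigM {a π z y w M : ℝ} (hz : z = 0 ∨ z = 1) (hy : 0 ≤ a → 0 ≤ y)
    (hw : a < 0 → 0 ≤ w) (hyM : 0 ≤ a → π - M * (1 - z) ≤ y) (hwM : a < 0 → π - M * z ≤ w) :
    a * (π * z) ≤ if 0 ≤ a then a * y else a * (π - w) := by
  split_ifs with ha
  · rcases hz with rfl | rfl
    · simpa using mul_nonneg ha (hy ha)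
    · simpa using mul_le_mul_of_nonneg_left (by simpa using hyM ha) ha
  · replace ha := lt_of_not_ge ha
    rcases hz with rfl | rfl
    · simpa using mul_nonneg_of_nonpos_of_nonpos ha.le (by simpa using hwM ha)
    · linarith [mul_nonpos_of_nonpos_of_nonneg ha.le (hw ha), mul_sub a π w]

lemma dotProduct_add_mulVec_le_signSplitBound {ψ : Matrix m n ℝ} {v π : m → ℝ} {z : n → ℝ}
    {y w : Matrix m n ℝ} {M : ℝ} (hz : ∀ j, z j = 0 ∨ z j = 1)
    (hy : ∀ i j, 0 ≤ ψ i j → 0 ≤ y i j) (hw : ∀ i j, ψ i j < 0 → 0 ≤ w i j)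
    (hyM : ∀ i j, 0 ≤ ψ i j → π i - M * (1 - z j) ≤ y i j)
    (hwM : ∀ i j, ψ i j < 0 → π i - M * z j ≤ w i j) :
    π ⬝ᵥ (v + ψ *ᵥ z) ≤ signSplitBound ψ v π y w := by
  rw [dotProduct_add_mulVec_eq_sum, signSplitBound_eq]
  gcongr with i _ j _
  exact mul_mul_le_ite_of_bigM (hz j) (hy i j) (hw i j) (hyM i j) (hwM i j)

lemma signSplitBound_of_mul (ψ : Matrix m n ℝ) (v π : m → ℝ) (z : n → ℝ) :
    signSplitBound ψ v π (of fun i j => π i * z j) (of fun i j => π i * (1 - z j)) =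
      π ⬝ᵥ (v + ψ *ᵥ z) := by
  rw [dotProduct_add_mulVec_eq_sum, signSplitBound_eq]
  congr 1
  refine sum_congr rfl fun i _ => sum_congr rfl fun j _ => ?_
  split_ifs
  · rfl
  · simp only [of_apply]
    ring

end BigM

/-- Enhanced (sign-split) Big-M exact robust counterpart of the robust
constraint `ζᵀu ≤ b` for all `ζ ∈ U(z) = {ζ : A ζ ≤ v + ψ z}` with binary `z`. -/
theorem stmt_2 (q p s : ℕ) (A : Matrix (Fin q) (Fin p) ℝ) (v : Fin q → ℝ)
    (ψ : Matrix (Fin q) (Fin s) ℝ) (z : Fin s → ℝ) (u : Fin p → ℝ) (b : ℝ)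
    (hz : ∀ j, z j = 0 ∨ z j = 1)
    (hne : ∃ ζ : Fin p → ℝ, ∀ i, A.mulVec ζ i ≤ v i + ψ.mulVec z i) :
    (∀ ζ : Fin p → ℝ, (∀ i, A.mulVec ζ i ≤ v i + ψ.mulVec z i) →
        ∑ k, ζ k * u k ≤ b) ↔
      (∃ M : ℝ, 0 < M ∧ ∃ π : Fin q → ℝ,
        ∃ y w : Matrix (Fin q) (Fin s) ℝ,
        (∀ i, 0 ≤ π i) ∧ (∀ j, ∑ i, A i j * π i = u j) ∧
        (∀ i j, 0 ≤ ψ i j → 0 ≤ y i j) ∧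
        (∀ i j, ψ i j < 0 → 0 ≤ w i j) ∧
        (∑ i, π i * (v i + ∑ j ∈ Finset.univ.filter (fun j => ψ i j < 0), ψ i j)
            + ∑ i, ∑ j ∈ Finset.univ.filter (fun j => 0 ≤ ψ i j), ψ i j * y i j
            - ∑ i, ∑ j ∈ Finset.univ.filter (fun j => ψ i j < 0), ψ i j * w i j
          ≤ b) ∧
        (∀ i j, 0 ≤ ψ i j → π i - M * (1 - z j) ≤ y i j) ∧
        (∀ i j, ψ i j < 0 → π i - M * z j ≤ w i j)) := by
  have htranspose (π : Fin q → ℝ) (j : Fin p) : (Aᵀ *ᵥ π) j = ∑ i, A i j * π i := rfl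
  change (∀ ζ, A *ᵥ ζ ≤ v + ψ *ᵥ z → ζ ⬝ᵥ u ≤ b) ↔ _
  rw [forall_dotProduct_le_iff (c := v + ψ *ᵥ z) hne]
  constructor
  · rintro ⟨π, hπ, hAπ, hb⟩
    replace hπ : ∀ i, 0 ≤ π i := hπ
    have hπM (i : Fin q) : π i ≤ ∑ i, π i + 1 := by
      linarith [single_le_sum (fun i _ => hπ i) (mem_univ i)]
    refine ⟨∑ i, π i + 1, (sum_nonneg fun i _ => hπ i).trans_lt (lt_add_one _), π,
      of fun i j => π i * z j,
      of fun i j => π i * (1 - z j), hπ, fun j => by rw [← htranspose, hAπ], ?_, ?_,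
      (signSplitBound_of_mul ψ v π z).trans_le hb, ?_, ?_⟩ <;>
      intro i j _ <;> rcases hz j with h | h <;> simp [h, hπ i, hπM i]
  · rintro ⟨M, -, π, y, w, hπ, hAπ, hy, hw, hb, hyM, hwM⟩
    exact ⟨π, hπ, funext fun j => (htranspose π j).trans (hAπ j),
      (dotProduct_add_mulVec_le_signSplitBound hz hy hw hyM hwM).trans hb⟩
end

section
/- Let π ∈ ℝ^q with π ≥ 0, z ∈ ℝ^s with 0 ≤ z ≤ 1 componentwise, v ∈ ℝ^q, ψ a real q×s matrix, and b ∈ ℝ. Then Σ_i π_i (v_i + Σ_j ψ_{i,j} z_j) ≤ b if and only if there exist real numbers y_{i,j} ≥ 0 for all pairs (i,j) with ψ_{i,j} ≥ 0 and real numbers w_{i,j} ≥ 0 for all pairs (i,j) with ψ_{i,j} < 0 such that y_{i,j} ≥ π_i z_j for all (i,j) with ψ_{i,j} ≥ 0, w_{i,j} ≥ π_i (1 − z_j) for all (i,j) with ψ_{i,j} < 0, and Σ_i π_i (v_i + Σ_{j : ψ_{i,j} < 0} ψ_{i,j}) + Σ_{i,j : ψ_{i,j} ≥ 0} ψ_{i,j}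 y_{i,j} − Σ_{i,j : ψ_{i,j} < 0} ψ_{i,j} w_{i,j} ≤ b. -/
/-- Exactness of the sign-split reformulation of the bilinear inequality
`Σ_i π_i (v_i + Σ_j ψ_{i,j} z_j) ≤ b` for `π ≥ 0` and `0 ≤ z ≤ 1`. -/
theorem stmt_3 (q s : ℕ) (π : Fin q → ℝ) (z : Fin s → ℝ) (v : Fin q → ℝ)
    (ψ : Matrix (Fin q) (Fin s) ℝ) (b : ℝ)
    (hπ : ∀ i, 0 ≤ π i) (hz : ∀ j, 0 ≤ z j ∧ z j ≤ 1) :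
    (∑ i, π i * (v i + ∑ j, ψ i j * z j) ≤ b) ↔
      (∃ y w : Matrix (Fin q) (Fin s) ℝ,
        (∀ i j, 0 ≤ ψ i j → 0 ≤ y i j ∧ π i * z j ≤ y i j) ∧
        (∀ i j, ψ i j < 0 → 0 ≤ w i j ∧ π i * (1 - z j) ≤ w i j) ∧
        (∑ i, π i * (v i + ∑ j ∈ Finset.univ.filter (fun j => ψ i j < 0), ψ i j)
            + ∑ i, ∑ j ∈ Finset.univ.filter (fun j => 0 ≤ ψ i j), ψ i j * y i j
            - ∑ i, ∑ j ∈ Finset.univ.filter (fun j => ψ i j < 0), ψ i j * w i j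
          ≤ b)) := by
  have split : ∀ (i : Fin q) (f : Fin s → ℝ),
      ∑ j, f j = ∑ j ∈ Finset.univ.filter (fun j => 0 ≤ ψ i j), f j
        + ∑ j ∈ Finset.univ.filter (fun j => ψ i j < 0), f j := by
    intro i f
    rw [← Finset.sum_filter_add_sum_filter_not Finset.univ (fun j => 0 ≤ ψ i j) f]
    congr 1
    apply Finset.sum_congr _ (fun _ _ => rfl)
    ext j
    simp [not_le]
  constructor
  · intro h
    refine ⟨fun i j => π i * z j, fun i j => π i * (1 - z j),
      fun i j _ => ⟨mul_nonneg (hπ i) (hz j).1, le_rfl⟩,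
      fun i j _ => ⟨mul_nonneg (hπ i) (by linarith [(hz j).2]), le_rfl⟩, ?_⟩
    have key : ∑ i, π i * (v i + ∑ j ∈ Finset.univ.filter (fun j => ψ i j < 0), ψ i j)
            + ∑ i, ∑ j ∈ Finset.univ.filter (fun j => 0 ≤ ψ i j), ψ i j * (π i * z j)
            - ∑ i, ∑ j ∈ Finset.univ.filter (fun j => ψ i j < 0), ψ i j * (π i * (1 - z j))
          = ∑ i, π i * (v i + ∑ j, ψ i j * z j) := by
      rw [← Finset.sum_add_distrib, ← Finset.sum_sub_distrib]
      refine Finset.sum_congr rfl (fun i _ => ?_)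
      have h1 : ∑ j ∈ Finset.univ.filter (fun j => 0 ≤ ψ i j), ψ i j * (π i * z j)
          = π i * ∑ j ∈ Finset.univ.filter (fun j => 0 ≤ ψ i j), ψ i j * z j := by
        rw [Finset.mul_sum]; exact Finset.sum_congr rfl (fun j _ => by ring)
      have h2 : ∑ j ∈ Finset.univ.filter (fun j => ψ i j < 0), ψ i j * (π i * (1 - z j))
          = π i * ∑ j ∈ Finset.univ.filter (fun j => ψ i j < 0), ψ i j
            - π i * ∑ j ∈ Finset.univ.filter (fun j => ψ i j < 0), ψ i j * z j := by
        rw [Finset.mul_sum, Finset.mul_sum, ← Finset.sum_sub_distrib]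
        exact Finset.sum_congr rfl (fun j _ => by ring)
      rw [split i (fun j => ψ i j * z j), h1, h2]; ring
    rw [key]; exact h
  · rintro ⟨y, w, hy, hw, hsum⟩
    refine le_trans ?_ hsum
    rw [← Finset.sum_add_distrib, ← Finset.sum_sub_distrib]
    refine Finset.sum_le_sum (fun i _ => ?_)
    have h1 : π i * ∑ j ∈ Finset.univ.filter (fun j => 0 ≤ ψ i j), ψ i j * z j
        ≤ ∑ j ∈ Finset.univ.filter (fun j => 0 ≤ ψ i j), ψ i j * y i j := by
      rw [Finset.mul_sum]
      refine Finset.sum_le_sum (fun j hj => ?_)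
      simp only [Finset.mem_filter] at hj
      have := (hy i j hj.2).2
      nlinarith [hj.2]
    have h2 : π i * ∑ j ∈ Finset.univ.filter (fun j => ψ i j < 0), ψ i j * z j
        ≤ π i * ∑ j ∈ Finset.univ.filter (fun j => ψ i j < 0), ψ i j
          - ∑ j ∈ Finset.univ.filter (fun j => ψ i j < 0), ψ i j * w i j := by
      rw [Finset.mul_sum, Finset.mul_sum, ← Finset.sum_sub_distrib]
      refine Finset.sum_le_sum (fun j hj => ?_)
      simp only [Finset.mem_filter] at hj
      have hwj := (hw i j hj.2).2
      have : ψ i j * w i j ≤ ψ i j * (π i * (1 - z j)) :=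
        mul_le_mul_of_nonpos_left hwj (le_of_lt hj.2)
      nlinarith
    rw [split i (fun j => ψ i j * z j)]
    calc π i * (v i + (∑ j ∈ Finset.univ.filter (fun j => 0 ≤ ψ i j), ψ i j * z j
            + ∑ j ∈ Finset.univ.filter (fun j => ψ i j < 0), ψ i j * z j))
        = π i * v i + π i * ∑ j ∈ Finset.univ.filter (fun j => 0 ≤ ψ i j), ψ i j * z j
            + π i * ∑ j ∈ Finset.univ.filter (fun j => ψ i j < 0), ψ i j * z j := by ring
      _ ≤ π i * v i + ∑ j ∈ Finset.univ.filter (fun j => 0 ≤ ψ i j), ψ i j * y i j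
            + (π i * ∑ j ∈ Finset.univ.filter (fun j => ψ i j < 0), ψ i j
              - ∑ j ∈ Finset.univ.filter (fun j => ψ i j < 0), ψ i j * w i j) := by
          linarith
      _ = π i * (v i + ∑ j ∈ Finset.univ.filter (fun j => ψ i j < 0), ψ i j)
            + ∑ j ∈ Finset.univ.filter (fun j => 0 ≤ ψ i j), ψ i j * y i j
            - ∑ j ∈ Finset.univ.filter (fun j => ψ i j < 0), ψ i j * w i j := by ring
end

section
/- Fix finite index sets I (areas), J (edge nodes), R (hardening levels) and an area i ∈ I. Let λ_i > 0, Δ_i ∈ ℝ, Γ₂ ≥ 0; let d̄_{i',j} ≥ 0, d̂_{i',j} ≥ 0, u_{i',j} ≥ 0 for all i' ∈ I, j ∈ J; let γ^r_{i',j} ∈ [0,1] with Σ_{r∈R} γ^r_{i',j} ≤ 1; let x ∈ ℝ^{I×J} with x ≥ 0 and t ∈ {0,1}^{I×J×R} with Σ_{r∈R} t^r_{i',j} ≤ 1 for all i',j. Then the robust delay constraint Σ_{j∈J} d_{i,j} x_{i,j} / λ_i ≤ Δ_i holds for every d ∈ D₂ if and only if there exist β ≥ 0 and ξ_j ≥ 0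 (j ∈ J) such that Δ_i ≥ Σ_{j} d̄_{i,j} x_{i,j}/λ_i + Σ_{j} (d̂_{i,j} u_{i,j}/λ_i) x_{i,j}² + Γ₂ β + Σ_{j} ξ_j − Σ_{j,r} γ^r_{i,j} t^r_{i,j} ξ_j, and β + ξ_j ≥ (d̂_{i,j}/λ_i) x_{i,j} for every j ∈ J. -/
open Finset

lemma knapsack_dual {J : Type*} [Fintype J] (c cap : J → ℝ) (Γ : ℝ)
    (hc : ∀ j, 0 ≤ c j) (hcap : ∀ j, 0 ≤ cap j) (hΓ : 0 ≤ Γ) :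
    ∃ β : ℝ, ∃ ξ : J → ℝ, ∃ g : J → ℝ,
      0 ≤ β ∧ (∀ j, 0 ≤ ξ j) ∧ (∀ j, c j ≤ β + ξ j) ∧
      (∀ j, 0 ≤ g j ∧ g j ≤ cap j) ∧ (∑ j, g j ≤ Γ) ∧
      Γ * β + ∑ j, cap j * ξ j ≤ ∑ j, c j * g j := by
  classical
  by_cases h0 : ∑ j, (if 0 < c j then cap j else 0) ≤ Γ
  · refine ⟨0, c, fun j => if 0 < c j then cap j else 0, le_refl 0, hc, ?_, ?_, h0, ?_⟩
    · intro j; simp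
    · intro j
      by_cases h : 0 < c j <;> simp [h, hcap j]
    · have hsum : ∑ j, c j * (if 0 < c j then cap j else 0) = ∑ j, cap j * c j := by
        refine Finset.sum_congr rfl (fun j _ => ?_)
        by_cases h : 0 < c j
        · simp [h, mul_comm]
        · have hz : c j = 0 := le_antisymm (not_lt.mp h) (hc j)
          simp [hz]
      rw [hsum]; simp
  · -- strong duality via greedy threshold
    set s : Finset ℝ := insert 0 (Finset.image c Finset.univ) with hs
    have hs0 : (0:ℝ) ∈ s := mem_insert_self _ _
    have hsc : ∀ j, c j ∈ s := fun j => mem_insert_of_mem (mem_image_of_mem c (mem_univ j))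
    have hsnn : ∀ b ∈ s, 0 ≤ b := by
      intro b hb
      rcases mem_insert.mp hb with h | h
      · exact h.ge
      · obtain ⟨j, _, rfl⟩ := mem_image.mp h; exact hc j
    set P : ℝ → Prop := fun b => ∑ j, (if b < c j then cap j else 0) ≤ Γ with hP
    set F := s.filter P with hF
    have hMF : s.max' ⟨0, hs0⟩ ∈ F := by
      refine mem_filter.mpr ⟨s.max'_mem _, ?_⟩
      have hz : ∑ j, (if s.max' ⟨0, hs0⟩ < c j then cap j else 0) = 0 := by
        refine Finset.sum_eq_zero (fun j _ => ?_)
        have : ¬ s.max' ⟨0, hs0⟩ < c j := not_lt.mpr (le_max' s (c j) (hsc j))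
        simp [this]
      simp only [hP, hz]
      exact hΓ
    have hFne : F.Nonempty := ⟨_, hMF⟩
    set B := F.min' hFne with hBdef
    have hBF : B ∈ F := F.min'_mem hFne
    have hBs : B ∈ s := (mem_filter.mp hBF).1
    have hPB : P B := (mem_filter.mp hBF).2
    have hBnn : 0 ≤ B := hsnn B hBs
    have hBpos : 0 < B := by
      rcases hBnn.lt_or_eq with h | h
      · exact h
      · exfalso; apply h0; rw [← h] at hPB; exact hPB
    have h0s' : (0:ℝ) ∈ s.filter (· < B) := mem_filter.mpr ⟨hs0, hBpos⟩
    set β' := (s.filter (· < B)).max' ⟨0, h0s'⟩ with hβ'def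
    have hβ'mem := (s.filter (· < B)).max'_mem ⟨0, h0s'⟩
    have hβ's : β' ∈ s := (mem_filter.mp hβ'mem).1
    have hβ'lt : β' < B := (mem_filter.mp hβ'mem).2
    have hnPβ' : ¬ P β' := by
      intro hp
      have : B ≤ β' := F.min'_le β' (mem_filter.mpr ⟨hβ's, hp⟩)
      linarith
    have hkey : ∀ j, β' < c j → B ≤ c j := by
      intro j hj
      by_contra hlt
      push_neg at hlt
      have hm : c j ∈ s.filter (· < B) := mem_filter.mpr ⟨hsc j, hlt⟩
      have h2 : c j ≤ β' := hβ'def ▸ Finset.le_max' _ _ hm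
      linarith
    set A := ∑ j, (if B < c j then cap j else 0) with hAdef
    set Bs := ∑ j, (if c j = B then cap j else 0) with hBsdef
    have hAle : A ≤ Γ := hPB
    have hsplit : ∑ j, (if β' < c j then cap j else 0) = A + Bs := by
      rw [hAdef, hBsdef, ← Finset.sum_add_distrib]
      refine Finset.sum_congr rfl (fun j _ => ?_)
      rcases lt_trichotomy (c j) B with h | h | h
      · have h1 : ¬ β' < c j := fun hb => absurd (hkey j hb) (not_le.mpr h)
        simp [h1, h.asymm, h.ne]
      · simp [h, hβ'lt]
      · have h1 : β' < c j := lt_trans hβ'lt h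
        simp [h1, h, h.ne']
    have hABs : Γ < A + Bs := by
      rw [← hsplit]
      exact not_le.mp hnPβ'
    have hBspos : 0 < Bs := by linarith
    set θ := (Γ - A) / Bs with hθdef
    have hθnn : 0 ≤ θ := div_nonneg (by linarith) hBspos.le
    have hθle : θ ≤ 1 := by
      rw [hθdef, div_le_one hBspos]; linarith
    have hθBs : θ * Bs = Γ - A := div_mul_cancel₀ _ hBspos.ne'
    refine ⟨B, fun j => max (c j - B) 0,
      fun j => (if B < c j then cap j else 0) + (if c j = B then θ * cap j else 0),
      hBnn, fun j => le_max_right _ _, ?_, ?_, ?_, ?_⟩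
    · intro j
      have := le_max_left (c j - B) 0
      linarith
    · intro j
      rcases lt_trichotomy (c j) B with h | h | h
      · simp [h.asymm, h.ne, hcap j]
      · constructor
        · simp [h, lt_irrefl]
          exact mul_nonneg hθnn (hcap j)
        · simp [h, lt_irrefl]
          exact mul_le_of_le_one_left (hcap j) hθle
      · simp [h, h.ne', hcap j]
    · have h2 : ∑ j, (if c j = B then θ * cap j else 0) = θ * Bs := by
        rw [hBsdef, Finset.mul_sum]
        refine Finset.sum_congr rfl (fun j _ => ?_)
        by_cases h : c j = B <;> simp [h]
      rw [Finset.sum_add_distrib, h2, hθBs, ← hAdef]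
      linarith
    · set Sc := ∑ j, (if B < c j then cap j * c j else 0) with hScdef
      have hξ : ∑ j, cap j * max (c j - B) 0
          = Sc - B * A := by
        rw [hScdef, hAdef, Finset.mul_sum, ← Finset.sum_sub_distrib]
        refine Finset.sum_congr rfl (fun j _ => ?_)
        by_cases h : B < c j
        · rw [max_eq_left (by linarith)]
          simp [h]; ring
        · rw [max_eq_right (by linarith [not_lt.mp h])]
          simp [h]
      have hobj : ∑ j, c j * ((if B < c j then cap j else 0) + (if c j = B then θ * cap j else 0))
          = Sc + B * (Γ - A) := by
        have e1 : ∀ j, c j * ((if B < c j then cap j else 0) + (if c j = B then θ * cap j else 0))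
            = (if B < c j then cap j * c j else 0) + B * θ * (if c j = B then cap j else 0) := by
          intro j
          rcases lt_trichotomy (c j) B with h | h | h
          · simp [h.asymm, h.ne]
          · simp [h, lt_irrefl]; ring
          · simp [h, h.ne']; ring
        rw [Finset.sum_congr rfl (fun j _ => e1 j), Finset.sum_add_distrib, ← hScdef,
          ← Finset.mul_sum, ← hBsdef]
        have : B * θ * Bs = B * (Γ - A) := by rw [mul_assoc, hθBs]
        rw [this]
      rw [hξ, hobj]
      linarith



/-- Exact dual reformulation of the robust average-delay constraint of area `i`
over the decision-dependent uncertainty set `D₂` of link delays. -/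
theorem stmt_7 {I J R : Type*} [Fintype I] [Fintype J] [Fintype R]
    (i : I) (lam : I → ℝ) (Δ : I → ℝ) (Γ₂ : ℝ)
    (dbar dhat u : I → J → ℝ) (γ : R → I → J → ℝ)
    (x : I → J → ℝ) (t : R → I → J → ℝ)
    (hlam : 0 < lam i) (hΓ : 0 ≤ Γ₂)
    (hdbar : ∀ i' j, 0 ≤ dbar i' j) (hdhat : ∀ i' j, 0 ≤ dhat i' j)
    (hu : ∀ i' j, 0 ≤ u i' j)
    (hγ : ∀ r i' j, 0 ≤ γ r i' j ∧ γ r i' j ≤ 1)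
    (hγsum : ∀ i' j, ∑ r, γ r i' j ≤ 1)
    (hx : ∀ i' j, 0 ≤ x i' j)
    (ht : ∀ r i' j, t r i' j = 0 ∨ t r i' j = 1)
    (htsum : ∀ i' j, ∑ r, t r i' j ≤ 1) :
    (∀ d : I → J → ℝ,
        (∃ g : I → J → ℝ,
          (∀ i' j, 0 ≤ g i' j ∧ g i' j ≤ 1 - ∑ r, γ r i' j * t r i' j) ∧
          (∑ i', ∑ j, g i' j ≤ Γ₂) ∧
          (∀ i' j, d i' j = dbar i' j + dhat i' j * (g i' j + u i' j * x i' j))) →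
        ∑ j, d i j * x i j / lam i ≤ Δ i) ↔
      (∃ β : ℝ, ∃ ξ : J → ℝ, 0 ≤ β ∧ (∀ j, 0 ≤ ξ j) ∧
        (∑ j, dbar i j * x i j / lam i
            + ∑ j, dhat i j * u i j / lam i * (x i j) ^ 2
            + Γ₂ * β + ∑ j, ξ j - ∑ j, ∑ r, γ r i j * t r i j * ξ j ≤ Δ i) ∧
        (∀ j, dhat i j / lam i * x i j ≤ β + ξ j)) := by
  classical
  have hcapnn : ∀ i' j, 0 ≤ 1 - ∑ r, γ r i' j * t r i' j := by
    intro i' j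
    have h1 : ∑ r, γ r i' j * t r i' j ≤ ∑ r, t r i' j := by
      refine Finset.sum_le_sum (fun r _ => ?_)
      have htn : 0 ≤ t r i' j := by rcases ht r i' j with h | h <;> simp [h]
      nlinarith [(hγ r i' j).2]
    have := htsum i' j
    linarith
  have hident : ∀ g0 : J → ℝ,
      ∑ j, (dbar i j + dhat i j * (g0 j + u i j * x i j)) * x i j / lam i
        = ∑ j, dbar i j * x i j / lam i
          + ∑ j, dhat i j * u i j / lam i * (x i j) ^ 2
          + ∑ j, dhat i j / lam i * x i j * g0 j := by
    intro g0
    rw [← Finset.sum_add_distrib, ← Finset.sum_add_distrib]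
    refine Finset.sum_congr rfl (fun j _ => ?_)
    field_simp
    ring
  have hcap2 : ∀ ξ : J → ℝ,
      ∑ j, (1 - ∑ r, γ r i j * t r i j) * ξ j
        = ∑ j, ξ j - ∑ j, ∑ r, γ r i j * t r i j * ξ j := by
    intro ξ
    rw [← Finset.sum_sub_distrib]
    refine Finset.sum_congr rfl (fun j _ => ?_)
    rw [← Finset.sum_mul]
    ring
  constructor
  · intro hrob
    obtain ⟨β, ξ, g, hβ, hξnn, hcξ, hgb, hgs, hobj⟩ :=
      knapsack_dual (fun j => dhat i j / lam i * x i j)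
        (fun j => 1 - ∑ r, γ r i j * t r i j) Γ₂
        (fun j => mul_nonneg (div_nonneg (hdhat i j) hlam.le) (hx i j))
        (fun j => hcapnn i j) hΓ
    refine ⟨β, ξ, hβ, hξnn, ?_, hcξ⟩
    set g' : I → J → ℝ := fun i' j => if i' = i then g j else 0 with hg'
    have hg'b : ∀ i' j, 0 ≤ g' i' j ∧ g' i' j ≤ 1 - ∑ r, γ r i' j * t r i' j := by
      intro i' j
      by_cases h : i' = i
      · subst h; simpa [hg'] using hgb j
      · simp [hg', h, hcapnn i' j]
    have hg's : ∑ i', ∑ j, g' i' j ≤ Γ₂ := by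
      have he : ∑ i', ∑ j, g' i' j = ∑ j, g j := by
        rw [hg']
        rw [Finset.sum_comm]
        refine Finset.sum_congr rfl (fun j _ => ?_)
        simp
      rw [he]; exact hgs
    have hd : ∑ j, (dbar i j + dhat i j * (g' i j + u i j * x i j)) * x i j / lam i ≤ Δ i :=
      hrob (fun i' j => dbar i' j + dhat i' j * (g' i' j + u i' j * x i' j))
        ⟨g', hg'b, hg's, fun i' j => rfl⟩
    have hgi : ∀ j, g' i j = g j := by intro j; simp [hg']
    rw [Finset.sum_congr rfl (fun j _ => by rw [hgi j]), hident g] at hd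
    have hc2 := hcap2 ξ
    linarith
  · rintro ⟨β, ξ, hβ, hξnn, hineq, hcξ⟩ d ⟨g, hgb, hgs, hdef⟩
    have hgirow : ∑ j, g i j ≤ Γ₂ := by
      refine le_trans ?_ hgs
      exact Finset.single_le_sum (f := fun i' => ∑ j, g i' j)
        (fun i' _ => Finset.sum_nonneg (fun j _ => (hgb i' j).1)) (Finset.mem_univ i)
    have hrw : ∑ j, d i j * x i j / lam i
        = ∑ j, (dbar i j + dhat i j * (g i j + u i j * x i j)) * x i j / lam i :=
      Finset.sum_congr rfl (fun j _ => by rw [hdef i j])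
    have hid := hident (fun j => g i j)
    rw [hrw, hid]
    have h1 : ∑ j, dhat i j / lam i * x i j * g i j ≤ ∑ j, (β + ξ j) * g i j :=
      Finset.sum_le_sum (fun j _ => mul_le_mul_of_nonneg_right (hcξ j) (hgb i j).1)
    have h2 : ∑ j, (β + ξ j) * g i j = β * ∑ j, g i j + ∑ j, ξ j * g i j := by
      rw [Finset.mul_sum, ← Finset.sum_add_distrib]
      exact Finset.sum_congr rfl (fun j _ => by ring)
    have h3 : ∑ j, ξ j * g i j ≤ ∑ j, (1 - ∑ r, γ r i j * t r i j) * ξ j := by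
      refine Finset.sum_le_sum (fun j _ => ?_)
      rw [mul_comm]
      exact mul_le_mul_of_nonneg_right (hgb i j).2 (hξnn j)
    have h5 : β * ∑ j, g i j ≤ β * Γ₂ := mul_le_mul_of_nonneg_left hgirow hβ
    have hc2 := hcap2 ξ
    linarith
end

section
/- Given a restricted 3-SAT instance with n variables and m clauses, there exists an assignment z ∈ {0,1}^n satisfying every clause if and only if there exists an RO-SAT-feasible triple (x, z, y) with y ≥ m (equivalently, the RO-SAT optimal value is at most −m). -/
/-- The decision-dependent uncertainty set of the RO-SAT instance. -/
def UU (n m : ℕ) (i1 i2 i3 : Fin m → Fin n) (z : Fin n → ℝ) : Set (Fin m → ℝ) :=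
  {ζ | ∀ c, z (i1 c) ≤ ζ c ∧ z (i2 c) ≤ ζ c ∧ 1 - z (i3 c) ≤ ζ c ∧ ζ c ≤ 1}

/-- RO-SAT feasibility of a triple `(x, z, y)`. -/
def ROSATFeasible (n m : ℕ) (i1 i2 i3 : Fin m → Fin n)
    (x : Fin m → ℝ) (z : Fin n → ℝ) (y : ℝ) : Prop :=
  (∀ c, 0 ≤ x c) ∧ (∀ j, 0 ≤ z j) ∧ 0 ≤ y ∧
  (∀ c, x c ≤ 1) ∧ (∀ c, -x c ≤ -1) ∧ (∀ j, z j ≤ 1) ∧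
  (∀ ζ ∈ UU n m i1 i2 i3 z, y ≤ ∑ c, ζ c * x c)

/-- The restricted 3-SAT instance is satisfiable iff there is an
RO-SAT-feasible triple with value `y ≥ m`. -/
theorem stmt_8 (n m : ℕ) (i1 i2 i3 : Fin m → Fin n) :
    (∃ z : Fin n → ℝ, (∀ j, z j = 0 ∨ z j = 1) ∧
        ∀ c, 1 ≤ z (i1 c) + z (i2 c) + (1 - z (i3 c))) ↔
      (∃ (x : Fin m → ℝ) (z : Fin n → ℝ) (y : ℝ),
        ROSATFeasible n m i1 i2 i3 x z y ∧ (m : ℝ) ≤ y) := by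
  constructor
  · rintro ⟨z, h01, hsat⟩
    refine ⟨fun _ => 1, z, m, ⟨fun c => by norm_num, ?_, by positivity,
      fun c => le_refl 1, fun c => by norm_num, ?_, ?_⟩, le_refl _⟩
    · intro j; rcases h01 j with h | h <;> rw [h] <;> norm_num
    · intro j; rcases h01 j with h | h <;> rw [h] <;> norm_num
    · intro ζ hζ
      have h1 : ∀ c, (1 : ℝ) ≤ ζ c := by
        intro c
        obtain ⟨ha, hb, hc, hd⟩ := hζ c
        have := hsat c
        rcases h01 (i1 c) with h1 | h1 <;> rcases h01 (i2 c) with h2 | h2 <;>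
          rcases h01 (i3 c) with h3 | h3 <;> linarith
      calc (m : ℝ) = ∑ _c : Fin m, (1 : ℝ) := by simp
        _ ≤ ∑ c, ζ c * 1 := by
            apply Finset.sum_le_sum
            intro c _
            simpa using h1 c
  · rintro ⟨x, z, y, ⟨hx0, hz0, hy0, hx1, hx1', hz1, hrob⟩, hym⟩
    have hx : ∀ c, x c = 1 := fun c => le_antisymm (hx1 c) (by have := hx1' c; linarith)
    set ζ : Fin m → ℝ := fun c => max (max (z (i1 c)) (z (i2 c))) (1 - z (i3 c)) with hζdef
    have hζU : ζ ∈ UU n m i1 i2 i3 z := by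
      intro c
      refine ⟨le_max_of_le_left (le_max_left _ _), le_max_of_le_left (le_max_right _ _),
        le_max_right _ _, ?_⟩
      exact max_le (max_le (hz1 _) (hz1 _)) (by have := hz0 (i3 c); linarith)
    have hsum : (m : ℝ) ≤ ∑ c, ζ c := by
      have := hrob ζ hζU
      have heq : ∑ c, ζ c * x c = ∑ c, ζ c := by
        apply Finset.sum_congr rfl; intro c _; rw [hx c, mul_one]
      linarith
    have hζ1 : ∀ c, (1 : ℝ) ≤ ζ c := by
      intro c
      by_contra hlt
      push_neg at hlt
      have : ∑ c, ζ c < ∑ _c : Fin m, (1 : ℝ) := by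
        apply Finset.sum_lt_sum (fun i _ => (hζU i).2.2.2) ⟨c, Finset.mem_univ c, hlt⟩
      simp at this
      linarith
    refine ⟨fun j => if z j = 1 then 1 else 0, fun j => by by_cases h : z j = 1 <;> simp [h], ?_⟩
    intro c
    have h := hζ1 c
    rw [hζdef] at h
    simp only [le_max_iff] at h
    have hnn : ∀ j, (0:ℝ) ≤ if z j = 1 then (1:ℝ) else 0 := by
      intro j; by_cases h : z j = 1 <;> simp [h]
    have hle : ∀ j, (if z j = 1 then (1:ℝ) else 0) ≤ 1 := by
      intro j; by_cases h : z j = 1 <;> simp [h]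
    rcases h with (h | h) | h
    · have : z (i1 c) = 1 := le_antisymm (hz1 _) h
      have h1 : (if z (i1 c) = 1 then (1:ℝ) else 0) = 1 := by simp [this]
      have := hnn (i2 c); have := hle (i3 c); linarith
    · have : z (i2 c) = 1 := le_antisymm (hz1 _) h
      have h1 : (if z (i2 c) = 1 then (1:ℝ) else 0) = 1 := by simp [this]
      have := hnn (i1 c); have := hle (i3 c); linarith
    · have hz3 : z (i3 c) = 0 := le_antisymm (by linarith) (hz0 _)
      have h1 : (if z (i3 c) = 1 then (1:ℝ) else 0) = 0 := by simp [hz3]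
      have := hnn (i1 c); have := hnn (i2 c); linarith
end

section
/- Given a restricted 3-SAT instance with n variables and m clauses, if z ∈ {0,1}^n satisfies every clause, then U(z) = {𝟙_m}, the singleton containing the all-ones vector of ℝ^m, and the triple (𝟙_m, z, m) is RO-SAT-feasible; consequently the RO-SAT optimal value is at most −m. -/
/-- If the binary assignment `z` satisfies every clause, then `U(z)` is the
singleton of the all-ones vector, `(𝟙, z, m)` is RO-SAT-feasible, and the
RO-SAT optimal value is at most `-m`. -/
theorem stmt_9 (n m : ℕ) (i1 i2 i3 : Fin m → Fin n) (z : Fin n → ℝ)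
    (hz : ∀ j, z j = 0 ∨ z j = 1)
    (hsat : ∀ c, 1 ≤ z (i1 c) + z (i2 c) + (1 - z (i3 c))) :
    UU n m i1 i2 i3 z = {fun _ => 1} ∧
    ROSATFeasible n m i1 i2 i3 (fun _ => 1) z (m : ℝ) ∧
    sInf {r : ℝ | ∃ x z' y, ROSATFeasible n m i1 i2 i3 x z' y ∧ r = -y}
      ≤ -(m : ℝ) := by
  have hz0 : ∀ j, 0 ≤ z j := fun j => by rcases hz j with h | h <;> simp [h]
  have hz1 : ∀ j, z j ≤ 1 := fun j => by rcases hz j with h | h <;> simp [h]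
  have hU : UU n m i1 i2 i3 z = {fun _ => 1} := by
    ext ζ
    constructor
    · intro hζ
      have : ζ = fun _ => 1 := by
        funext c
        obtain ⟨h1, h2, h3, h4⟩ := hζ c
        -- one of the three lower bounds equals 1
        have hsc := hsat c
        have key : (1:ℝ) ≤ ζ c := by
          rcases hz (i1 c) with e1 | e1 <;> rcases hz (i2 c) with e2 | e2 <;>
            rcases hz (i3 c) with e3 | e3 <;> linarith [e1, e2, e3, h1, h2, h3, hsc]
        linarith
      exact this
    · rintro rfl c
      exact ⟨hz1 _, hz1 _, sub_le_self _ (hz0 (i3 c)), le_refl 1⟩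
  have hfeas : ROSATFeasible n m i1 i2 i3 (fun _ => 1) z (m : ℝ) := by
    refine ⟨fun c => zero_le_one, hz0, Nat.cast_nonneg m, fun c => le_refl 1,
      fun c => le_refl (-1), hz1, ?_⟩
    intro ζ hζ
    rw [hU] at hζ
    simp only [Set.mem_singleton_iff] at hζ
    subst hζ
    simp
  refine ⟨hU, hfeas, ?_⟩
  have hbdd : BddBelow {r : ℝ | ∃ x z' y, ROSATFeasible n m i1 i2 i3 x z' y ∧ r = -y} := by
    refine ⟨-(m : ℝ), ?_⟩
    rintro r ⟨x, z', y, ⟨hx0, hz'0, hy0, hx1, hxm1, hz'1, hub⟩, rfl⟩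
    have hone : (fun _ => (1:ℝ)) ∈ UU n m i1 i2 i3 z' := by
      intro c
      exact ⟨hz'1 _, hz'1 _, sub_le_self _ (hz'0 (i3 c)), le_refl 1⟩
    have := hub _ hone
    have hsum : ∑ c, (1:ℝ) * x c ≤ m := by
      calc ∑ c, (1:ℝ) * x c ≤ ∑ _c : Fin m, (1:ℝ) := by
            apply Finset.sum_le_sum; intro c _; simpa using hx1 c
        _ = m := by simp
    linarith
  exact csInf_le hbdd ⟨(fun _ => 1), z, (m : ℝ), hfeas, rfl⟩
end

section
/- Given a restricted 3-SAT instance with n variables and m clauses, suppose (x, z, y) is an RO-SAT-feasible triple with y ≥ m. Then for every clause c, max{ z_{i₁(c)}, z_{i₂(c)}, 1 − z_{i₃(c)} } = 1, and the binary assignment ẑ ∈ {0,1}^n defined by ẑ_j = 1 if z_j = 1 and ẑ_j = 0 otherwise satisfies every clause; in particular the instance is satisfiable. -/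
/-- If `(x, z, y)` is RO-SAT-feasible with `y ≥ m`, then every clause maximum
equals one, the rounded binary assignment `ẑ` satisfies every clause, and in
particular the instance is satisfiable. -/
theorem stmt_12 (n m : ℕ) (i1 i2 i3 : Fin m → Fin n)
    (x : Fin m → ℝ) (z : Fin n → ℝ) (y : ℝ)
    (hfeas : ROSATFeasible n m i1 i2 i3 x z y) (hy : (m : ℝ) ≤ y) :
    (∀ c, max (z (i1 c)) (max (z (i2 c)) (1 - z (i3 c))) = 1) ∧
    (∀ c, 1 ≤ (if z (i1 c) = 1 then (1 : ℝ) else 0)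
        + (if z (i2 c) = 1 then (1 : ℝ) else 0)
        + (1 - (if z (i3 c) = 1 then (1 : ℝ) else 0))) ∧
    (∃ zb : Fin n → ℝ, (∀ j, zb j = 0 ∨ zb j = 1) ∧
        ∀ c, 1 ≤ zb (i1 c) + zb (i2 c) + (1 - zb (i3 c))) := by
  obtain ⟨hx0, hz0, hy0, hx1, hxm1, hz1, hU⟩ := hfeas
  have hxeq : ∀ c, x c = 1 := fun c => le_antisymm (hx1 c) (by linarith [hxm1 c])
  set M : Fin m → ℝ := fun c => max (z (i1 c)) (max (z (i2 c)) (1 - z (i3 c))) with hM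
  have hMle1 : ∀ c, M c ≤ 1 := by
    intro c
    simp only [hM, max_le_iff]
    exact ⟨hz1 _, hz1 _, by linarith [hz0 (i3 c)]⟩
  have hMmem : M ∈ UU n m i1 i2 i3 z := by
    intro c
    exact ⟨le_max_left _ _, le_trans (le_max_left _ _) (le_max_right _ _),
      le_trans (le_max_right _ _) (le_max_right _ _), hMle1 c⟩
  have hsum : (m : ℝ) ≤ ∑ c, M c := by
    have := hU M hMmem
    have heq : ∑ c, M c * x c = ∑ c, M c := by
      apply Finset.sum_congr rfl; intro c _; rw [hxeq c, mul_one]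
    linarith
  have hMeq : ∀ c, M c = 1 := by
    have hle : ∑ c, M c ≤ ∑ _c : Fin m, (1 : ℝ) :=
      Finset.sum_le_sum fun c _ => hMle1 c
    have h1 : ∑ _c : Fin m, (1 : ℝ) = (m : ℝ) := by simp
    have heq : ∑ c, M c = ∑ _c : Fin m, (1 : ℝ) := le_antisymm hle (by linarith)
    have := (Finset.sum_eq_sum_iff_of_le (fun c _ => hMle1 c)).mp heq
    exact fun c => this c (Finset.mem_univ c)
  have key : ∀ c, z (i1 c) = 1 ∨ z (i2 c) = 1 ∨ z (i3 c) = 0 := by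
    intro c
    have := hMeq c
    rcases max_cases (z (i1 c)) (max (z (i2 c)) (1 - z (i3 c))) with ⟨h, _⟩ | ⟨h, _⟩
    · left; rw [hM] at this; simp only at this; linarith [h ▸ this]
    · rw [hM] at this; simp only at this; rw [h] at this
      rcases max_cases (z (i2 c)) (1 - z (i3 c)) with ⟨h2, _⟩ | ⟨h2, _⟩
      · right; left; linarith [h2 ▸ this]
      · right; right; rw [h2] at this; linarith
  refine ⟨hMeq, ?_, ?_⟩
  · intro c
    rcases key c with h | h | h
    · rw [if_pos h]
      have : (0:ℝ) ≤ if z (i2 c) = 1 then (1:ℝ) else 0 := by positivity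
      have h3 : (if z (i3 c) = 1 then (1:ℝ) else 0) ≤ 1 := by split <;> norm_num
      linarith
    · rw [if_pos h]
      have : (0:ℝ) ≤ if z (i1 c) = 1 then (1:ℝ) else 0 := by positivity
      have h3 : (if z (i3 c) = 1 then (1:ℝ) else 0) ≤ 1 := by split <;> norm_num
      linarith
    · have h3 : z (i3 c) ≠ 1 := by rw [h]; norm_num
      rw [if_neg h3]
      have : (0:ℝ) ≤ if z (i1 c) = 1 then (1:ℝ) else 0 := by positivity
      have : (0:ℝ) ≤ if z (i2 c) = 1 then (1:ℝ) else 0 := by positivity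
      linarith
  · refine ⟨fun j => if z j = 1 then (1:ℝ) else 0, fun j => by beta_reduce; split <;> simp, ?_⟩
    intro c
    beta_reduce
    rcases key c with h | h | h
    · rw [if_pos h]
      have : (0:ℝ) ≤ if z (i2 c) = 1 then (1:ℝ) else 0 := by positivity
      have h3 : (if z (i3 c) = 1 then (1:ℝ) else 0) ≤ 1 := by split <;> norm_num
      linarith
    · rw [if_pos h]
      have : (0:ℝ) ≤ if z (i1 c) = 1 then (1:ℝ) else 0 := by positivity
      have h3 : (if z (i3 c) = 1 then (1:ℝ) else 0) ≤ 1 := by split <;> norm_num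
      linarith
    · have h3 : z (i3 c) ≠ 1 := by rw [h]; norm_num
      rw [if_neg h3]
      have : (0:ℝ) ≤ if z (i1 c) = 1 then (1:ℝ) else 0 := by positivity
      have : (0:ℝ) ≤ if z (i2 c) = 1 then (1:ℝ) else 0 := by positivity
      linarith
end

section
/- In the robust edge-hardening model RO-DIU with the decision-independent uncertainty set D₁ and strictly positive hardening costs h^r_{i,j} > 0: for every RO-DIU-feasible point (t, x, w), the point (0, x, w) is also RO-DIU-feasible and its worst-case objective value sup_{d∈D₁} [ Σ_{i,j,r} h^r_{i,j} t^r_{i,j} + ρ Σ_{i,j} d_{i,j} x_{i,j} + Σ_{i} s_i w_i ] does not decrease when t is replaced by 0, and strictly decreases whenever t ≠ 0. Consequently every optimal solution of RO-DIU has t = 0, and the optimal (infimum) value of RO-DIU equals the optimal value of RO-NH, the problem of minimizing sup_{d∈D₁} [ ρ Σ_{i,j} d_{i,j} x_{i,j} + Σ_{i} s_i w_i ] over pairs (x, w) satisfying the constraints not involving t. -/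
/-- The decision-independent (exogenous) uncertainty set `D₁` of link delays. -/
def D1 {I J : Type*} [Fintype I] [Fintype J]
    (dbar dhat : I → J → ℝ) (Γ₁ : ℝ) : Set (I → J → ℝ) :=
  {d | ∃ g : I → J → ℝ, (∀ i j, 0 ≤ g i j ∧ g i j ≤ 1) ∧
    (∑ i, ∑ j, g i j ≤ Γ₁) ∧
    (∀ i j, d i j = dbar i j + g i j * dhat i j)}

/-- Feasibility of `(t, x, w)` in the robust model RO-DIU. -/
def RODIUFeasible {I J R : Type*} [Fintype I] [Fintype J] [Fintype R]
    (h : I → J → R → ℝ) (B : ℝ) (C : J → ℝ) (lam : I → ℤ)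
    (α : I → ℝ) (Δ : I → ℝ) (dbar dhat : I → J → ℝ) (Γ₁ : ℝ)
    (t : I → J → R → ℝ) (x : I → J → ℤ) (w : I → ℤ) : Prop :=
  (∀ i j r, t i j r = 0 ∨ t i j r = 1) ∧
  (∀ i j, 0 ≤ x i j) ∧ (∀ i, 0 ≤ w i) ∧
  (∑ i, ∑ j, ∑ r, h i j r * t i j r ≤ B) ∧
  (∀ i j, ∑ r, t i j r ≤ 1) ∧
  (∀ j, ((∑ i, x i j : ℤ) : ℝ) ≤ C j) ∧
  (∀ i, w i + ∑ j, x i j = lam i) ∧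
  (∀ i, (w i : ℝ) ≤ α i * (lam i : ℝ)) ∧
  (∀ d ∈ D1 dbar dhat Γ₁, ∀ i,
    ∑ j, d i j * ((x i j : ℤ) : ℝ) ≤ Δ i * (lam i : ℝ))

/-- Worst-case (over `D₁`) objective value of `(t, x, w)` in RO-DIU. -/
noncomputable def RODIUWorstObj {I J R : Type*} [Fintype I] [Fintype J] [Fintype R]
    (h : I → J → R → ℝ) (s : I → ℝ) (ρ : ℝ) (dbar dhat : I → J → ℝ) (Γ₁ : ℝ)
    (t : I → J → R → ℝ) (x : I → J → ℤ) (w : I → ℤ) : ℝ :=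
  sSup {r : ℝ | ∃ d ∈ D1 dbar dhat Γ₁,
    r = ∑ i, ∑ j, ∑ r', h i j r' * t i j r'
      + ρ * ∑ i, ∑ j, d i j * ((x i j : ℤ) : ℝ)
      + ∑ i, s i * ((w i : ℤ) : ℝ)}

/-- Feasibility of `(x, w)` in the reduced robust model RO-NH. -/
def RONHFeasible {I J : Type*} [Fintype I] [Fintype J]
    (C : J → ℝ) (lam : I → ℤ) (α : I → ℝ) (Δ : I → ℝ)
    (dbar dhat : I → J → ℝ) (Γ₁ : ℝ)
    (x : I → J → ℤ) (w : I → ℤ) : Prop :=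
  (∀ i j, 0 ≤ x i j) ∧ (∀ i, 0 ≤ w i) ∧
  (∀ j, ((∑ i, x i j : ℤ) : ℝ) ≤ C j) ∧
  (∀ i, w i + ∑ j, x i j = lam i) ∧
  (∀ i, (w i : ℝ) ≤ α i * (lam i : ℝ)) ∧
  (∀ d ∈ D1 dbar dhat Γ₁, ∀ i,
    ∑ j, d i j * ((x i j : ℤ) : ℝ) ≤ Δ i * (lam i : ℝ))

/-- Worst-case (over `D₁`) objective value of `(x, w)` in RO-NH. -/
noncomputable def RONHWorstObj {I J : Type*} [Fintype I] [Fintype J]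
    (s : I → ℝ) (ρ : ℝ) (dbar dhat : I → J → ℝ) (Γ₁ : ℝ)
    (x : I → J → ℤ) (w : I → ℤ) : ℝ :=
  sSup {r : ℝ | ∃ d ∈ D1 dbar dhat Γ₁,
    r = ρ * ∑ i, ∑ j, d i j * ((x i j : ℤ) : ℝ)
      + ∑ i, s i * ((w i : ℤ) : ℝ)}

section Aux

variable {I J R : Type*} [Fintype I] [Fintype J] [Fintype R]

lemma dbar_mem_D1 (dbar dhat : I → J → ℝ) {Γ₁ : ℝ} (hΓ : 0 ≤ Γ₁) :
    dbar ∈ D1 dbar dhat Γ₁ :=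
  ⟨fun _ _ => 0, fun _ _ => ⟨le_refl _, zero_le_one⟩, by simpa using hΓ,
    fun i j => by ring⟩

lemma D1_le {dbar dhat : I → J → ℝ} {Γ₁ : ℝ} (hdhat : ∀ i j, 0 ≤ dhat i j)
    {d : I → J → ℝ} (hd : d ∈ D1 dbar dhat Γ₁) (i : I) (j : J) :
    dbar i j ≤ d i j ∧ d i j ≤ dbar i j + dhat i j := by
  obtain ⟨g, hg01, _, hdef⟩ := hd
  constructor
  · rw [hdef i j]; nlinarith [(hg01 i j).1, hdhat i j]
  · rw [hdef i j]; nlinarith [(hg01 i j).2, hdhat i j]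

/-- The defining set of RO-NH worst-case objective. -/
def NHSet (s : I → ℝ) (ρ : ℝ) (dbar dhat : I → J → ℝ) (Γ₁ : ℝ)
    (x : I → J → ℤ) (w : I → ℤ) : Set ℝ :=
  {r : ℝ | ∃ d ∈ D1 dbar dhat Γ₁,
    r = ρ * ∑ i, ∑ j, d i j * ((x i j : ℤ) : ℝ)
      + ∑ i, s i * ((w i : ℤ) : ℝ)}

lemma NHSet_nonempty (s : I → ℝ) (ρ : ℝ) (dbar dhat : I → J → ℝ) {Γ₁ : ℝ}
    (hΓ : 0 ≤ Γ₁) (x : I → J → ℤ) (w : I → ℤ) :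
    (NHSet s ρ dbar dhat Γ₁ x w).Nonempty :=
  ⟨_, dbar, dbar_mem_D1 dbar dhat hΓ, rfl⟩

lemma NHSet_bddAbove (s : I → ℝ) {ρ : ℝ} (hρ : 0 ≤ ρ) (dbar dhat : I → J → ℝ)
    {Γ₁ : ℝ} (hdhat : ∀ i j, 0 ≤ dhat i j)
    {x : I → J → ℤ} (hx : ∀ i j, 0 ≤ x i j) (w : I → ℤ) :
    BddAbove (NHSet s ρ dbar dhat Γ₁ x w) := by
  refine ⟨ρ * ∑ i, ∑ j, (dbar i j + dhat i j) * ((x i j : ℤ) : ℝ)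
      + ∑ i, s i * ((w i : ℤ) : ℝ), ?_⟩
  rintro r ⟨d, hd, rfl⟩
  have : (∑ i, ∑ j, d i j * ((x i j : ℤ) : ℝ)) ≤
      ∑ i, ∑ j, (dbar i j + dhat i j) * ((x i j : ℤ) : ℝ) := by
    refine Finset.sum_le_sum fun i _ => Finset.sum_le_sum fun j _ => ?_
    have hxn : (0 : ℝ) ≤ ((x i j : ℤ) : ℝ) := by exact_mod_cast hx i j
    exact mul_le_mul_of_nonneg_right ((D1_le hdhat hd i j).2) hxn
  nlinarith [mul_le_mul_of_nonneg_left this hρ]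

lemma NHObj_nonneg {s : I → ℝ} (hs : ∀ i, 0 ≤ s i) {ρ : ℝ} (hρ : 0 ≤ ρ)
    {dbar dhat : I → J → ℝ} {Γ₁ : ℝ} (hΓ : 0 ≤ Γ₁)
    (hdbar : ∀ i j, 0 ≤ dbar i j) (hdhat : ∀ i j, 0 ≤ dhat i j)
    {x : I → J → ℤ} (hx : ∀ i j, 0 ≤ x i j) {w : I → ℤ} (hw : ∀ i, 0 ≤ w i) :
    0 ≤ RONHWorstObj s ρ dbar dhat Γ₁ x w := by
  have hmem : (ρ * ∑ i, ∑ j, dbar i j * ((x i j : ℤ) : ℝ)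
      + ∑ i, s i * ((w i : ℤ) : ℝ)) ∈ NHSet s ρ dbar dhat Γ₁ x w :=
    ⟨dbar, dbar_mem_D1 dbar dhat hΓ, rfl⟩
  have hval : 0 ≤ ρ * ∑ i, ∑ j, dbar i j * ((x i j : ℤ) : ℝ)
      + ∑ i, s i * ((w i : ℤ) : ℝ) := by
    have h1 : 0 ≤ ∑ i, ∑ j, dbar i j * ((x i j : ℤ) : ℝ) := by
      refine Finset.sum_nonneg fun i _ => Finset.sum_nonneg fun j _ => ?_
      have : (0 : ℝ) ≤ ((x i j : ℤ) : ℝ) := by exact_mod_cast hx i j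
      exact mul_nonneg (hdbar i j) this
    have h2 : 0 ≤ ∑ i, s i * ((w i : ℤ) : ℝ) := by
      refine Finset.sum_nonneg fun i _ => ?_
      have : (0 : ℝ) ≤ ((w i : ℤ) : ℝ) := by exact_mod_cast hw i
      exact mul_nonneg (hs i) this
    positivity
  calc (0:ℝ) ≤ _ := hval
    _ ≤ _ := le_csSup (NHSet_bddAbove s hρ dbar dhat hdhat hx w) hmem

/-- Decomposition of the RO-DIU worst-case objective. -/
lemma RODIUWorstObj_eq (h : I → J → R → ℝ) (s : I → ℝ) {ρ : ℝ} (hρ : 0 ≤ ρ)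
    (dbar dhat : I → J → ℝ) {Γ₁ : ℝ} (hΓ : 0 ≤ Γ₁) (hdhat : ∀ i j, 0 ≤ dhat i j)
    (t : I → J → R → ℝ) {x : I → J → ℤ} (hx : ∀ i j, 0 ≤ x i j) (w : I → ℤ) :
    RODIUWorstObj h s ρ dbar dhat Γ₁ t x w =
      (∑ i, ∑ j, ∑ r', h i j r' * t i j r') + RONHWorstObj s ρ dbar dhat Γ₁ x w := by
  set H := ∑ i, ∑ j, ∑ r', h i j r' * t i j r' with hH
  have hset : {r : ℝ | ∃ d ∈ D1 dbar dhat Γ₁,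
      r = H + ρ * ∑ i, ∑ j, d i j * ((x i j : ℤ) : ℝ)
        + ∑ i, s i * ((w i : ℤ) : ℝ)} =
      (fun r => H + r) '' NHSet s ρ dbar dhat Γ₁ x w := by
    ext r
    constructor
    · rintro ⟨d, hd, rfl⟩
      exact ⟨_, ⟨d, hd, rfl⟩, by ring⟩
    · rintro ⟨r', ⟨d, hd, rfl⟩, rfl⟩
      exact ⟨d, hd, by ring⟩
  have := (OrderIso.addLeft H).map_csSup'
    (NHSet_nonempty s ρ dbar dhat hΓ x w) (NHSet_bddAbove s hρ dbar dhat hdhat hx w)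
  simp only [OrderIso.addLeft_apply] at this
  rw [RODIUWorstObj, hset, RONHWorstObj]
  rw [← this]
  rfl

end Aux

/-- With strictly positive hardening costs and the exogenous uncertainty set
`D₁`, dropping the hardening decisions keeps RO-DIU feasibility and never
increases (strictly decreases, if `t ≠ 0`) the worst-case objective; hence
every optimal RO-DIU solution has `t = 0` and the optimal values of RO-DIU
and RO-NH coincide. -/
theorem stmt_14 {I J R : Type*} [Fintype I] [Fintype J] [Fintype R]
    (h : I → J → R → ℝ) (B : ℝ) (C : J → ℝ) (lam : I → ℤ)
    (s : I → ℝ) (ρ : ℝ) (dbar dhat : I → J → ℝ) (α : I → ℝ) (Δ : I → ℝ)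
    (Γ₁ : ℝ)
    (hh : ∀ i j r, 0 < h i j r) (hB : 0 ≤ B) (hC : ∀ j, 0 ≤ C j)
    (hlam : ∀ i, 0 < lam i) (hs : ∀ i, 0 ≤ s i) (hρ : 0 ≤ ρ)
    (hdbar : ∀ i j, 0 ≤ dbar i j) (hdhat : ∀ i j, 0 ≤ dhat i j)
    (hα : ∀ i, 0 ≤ α i ∧ α i ≤ 1) (hΔ : ∀ i, 0 ≤ Δ i) (hΓ : 0 ≤ Γ₁) :
    (∀ t x w, RODIUFeasible h B C lam α Δ dbar dhat Γ₁ t x w →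
      RODIUFeasible h B C lam α Δ dbar dhat Γ₁ (fun _ _ _ => 0) x w ∧
      RODIUWorstObj h s ρ dbar dhat Γ₁ (fun _ _ _ => 0) x w ≤
        RODIUWorstObj h s ρ dbar dhat Γ₁ t x w ∧
      (t ≠ (fun _ _ _ => 0) →
        RODIUWorstObj h s ρ dbar dhat Γ₁ (fun _ _ _ => 0) x w <
          RODIUWorstObj h s ρ dbar dhat Γ₁ t x w)) ∧
    (∀ t x w, RODIUFeasible h B C lam α Δ dbar dhat Γ₁ t x w →
      (∀ t' x' w', RODIUFeasible h B C lam α Δ dbar dhat Γ₁ t' x' w' →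
        RODIUWorstObj h s ρ dbar dhat Γ₁ t x w ≤
          RODIUWorstObj h s ρ dbar dhat Γ₁ t' x' w') →
      t = fun _ _ _ => 0) ∧
    sInf {r : ℝ | ∃ t x w, RODIUFeasible h B C lam α Δ dbar dhat Γ₁ t x w ∧
        r = RODIUWorstObj h s ρ dbar dhat Γ₁ t x w} =
      sInf {r : ℝ | ∃ x w, RONHFeasible C lam α Δ dbar dhat Γ₁ x w ∧
        r = RONHWorstObj s ρ dbar dhat Γ₁ x w} := by
  -- basic facts about the hardening cost
  have Hnonneg : ∀ t : I → J → R → ℝ, (∀ i j r, t i j r = 0 ∨ t i j r = 1) →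
      0 ≤ ∑ i, ∑ j, ∑ r', h i j r' * t i j r' := by
    intro t ht
    refine Finset.sum_nonneg fun i _ => Finset.sum_nonneg fun j _ =>
      Finset.sum_nonneg fun r _ => ?_
    rcases ht i j r with h0 | h1
    · simp [h0]
    · simp [h1]; exact (hh i j r).le
  have Hpos : ∀ t : I → J → R → ℝ, (∀ i j r, t i j r = 0 ∨ t i j r = 1) →
      t ≠ (fun _ _ _ => 0) → 0 < ∑ i, ∑ j, ∑ r', h i j r' * t i j r' := by
    intro t ht htne
    have : ∃ i j r, t i j r ≠ 0 := by
      by_contra hcon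
      push_neg at hcon
      exact htne (by funext i j r; exact hcon i j r)
    obtain ⟨i0, j0, r0, hne⟩ := this
    have ht1 : t i0 j0 r0 = 1 := (ht i0 j0 r0).resolve_left hne
    have hterm : (0:ℝ) < h i0 j0 r0 * t i0 j0 r0 := by
      rw [ht1, mul_one]; exact hh i0 j0 r0
    have h1 : h i0 j0 r0 * t i0 j0 r0 ≤ ∑ r', h i0 j0 r' * t i0 j0 r' :=
      Finset.single_le_sum (f := fun r' => h i0 j0 r' * t i0 j0 r')
        (fun r _ => by rcases ht i0 j0 r with h0|h0 <;> simp [h0]; exact (hh i0 j0 r).le)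
        (Finset.mem_univ r0)
    have h2 : ∑ r', h i0 j0 r' * t i0 j0 r' ≤ ∑ j, ∑ r', h i0 j r' * t i0 j r' :=
      Finset.single_le_sum (f := fun j => ∑ r', h i0 j r' * t i0 j r')
        (fun j _ => Finset.sum_nonneg fun r _ => by
          rcases ht i0 j r with h0|h0 <;> simp [h0]; exact (hh i0 j r).le)
        (Finset.mem_univ j0)
    have h3 : ∑ j, ∑ r', h i0 j r' * t i0 j r' ≤
        ∑ i, ∑ j, ∑ r', h i j r' * t i j r' :=
      Finset.single_le_sum (f := fun i => ∑ j, ∑ r', h i j r' * t i j r')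
        (fun i _ => Finset.sum_nonneg fun j _ => Finset.sum_nonneg fun r _ => by
          rcases ht i j r with h0|h0 <;> simp [h0]; exact (hh i j r).le)
        (Finset.mem_univ i0)
    linarith
  have H0 : (∑ i, ∑ j, ∑ r' : R, h i j r' * (0:ℝ)) = 0 := by simp
  -- feasibility with t = 0
  have feas0 : ∀ x w, (∀ i j, 0 ≤ x i j) → (∀ i, 0 ≤ w i) →
      (∀ j, ((∑ i, x i j : ℤ) : ℝ) ≤ C j) →
      (∀ i, w i + ∑ j, x i j = lam i) →
      (∀ i, (w i : ℝ) ≤ α i * (lam i : ℝ)) →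
      (∀ d ∈ D1 dbar dhat Γ₁, ∀ i,
        ∑ j, d i j * ((x i j : ℤ) : ℝ) ≤ Δ i * (lam i : ℝ)) →
      RODIUFeasible h B C lam α Δ dbar dhat Γ₁ (fun _ _ _ => 0) x w := by
    intro x w h1 h2 h3 h4 h5 h6
    exact ⟨fun _ _ _ => Or.inl rfl, h1, h2, by simpa using hB,
      fun i j => by simp, h3, h4, h5, h6⟩
  -- objective decomposition for a feasible point
  have objeq : ∀ (t : I → J → R → ℝ) (x : I → J → ℤ) (w : I → ℤ),
      (∀ i j, 0 ≤ x i j) →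
      RODIUWorstObj h s ρ dbar dhat Γ₁ t x w =
        (∑ i, ∑ j, ∑ r', h i j r' * t i j r') +
          RONHWorstObj s ρ dbar dhat Γ₁ x w := by
    intro t x w hx
    exact RODIUWorstObj_eq h s hρ dbar dhat hΓ hdhat t hx w
  have obj0 : ∀ (x : I → J → ℤ) (w : I → ℤ), (∀ i j, 0 ≤ x i j) →
      RODIUWorstObj h s ρ dbar dhat Γ₁ (fun _ _ _ => 0) x w =
        RONHWorstObj s ρ dbar dhat Γ₁ x w := by
    intro x w hx
    rw [objeq _ x w hx]
    simp
  have part1 : ∀ t x w, RODIUFeasible h B C lam α Δ dbar dhat Γ₁ t x w →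
      RODIUFeasible h B C lam α Δ dbar dhat Γ₁ (fun _ _ _ => 0) x w ∧
      RODIUWorstObj h s ρ dbar dhat Γ₁ (fun _ _ _ => 0) x w ≤
        RODIUWorstObj h s ρ dbar dhat Γ₁ t x w ∧
      (t ≠ (fun _ _ _ => 0) →
        RODIUWorstObj h s ρ dbar dhat Γ₁ (fun _ _ _ => 0) x w <
          RODIUWorstObj h s ρ dbar dhat Γ₁ t x w) := by
    intro t x w hfeas
    obtain ⟨ht01, hx, hw, _, _, h3, h4, h5, h6⟩ := hfeas
    refine ⟨feas0 x w hx hw h3 h4 h5 h6, ?_, ?_⟩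
    · rw [obj0 x w hx, objeq t x w hx]
      linarith [Hnonneg t ht01]
    · intro htne
      rw [obj0 x w hx, objeq t x w hx]
      linarith [Hpos t ht01 htne]
  refine ⟨part1, ?_, ?_⟩
  · -- optimality forces t = 0
    intro t x w hfeas hopt
    by_contra htne
    obtain ⟨hfeas0, _, hlt⟩ := part1 t x w hfeas
    have h1 := hopt (fun _ _ _ => 0) x w hfeas0
    exact absurd (hlt htne) (not_lt.mpr h1)
  · -- equality of optimal values
    set A := {r : ℝ | ∃ t x w, RODIUFeasible h B C lam α Δ dbar dhat Γ₁ t x w ∧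
        r = RODIUWorstObj h s ρ dbar dhat Γ₁ t x w} with hA
    set A' := {r : ℝ | ∃ x w, RONHFeasible C lam α Δ dbar dhat Γ₁ x w ∧
        r = RONHWorstObj s ρ dbar dhat Γ₁ x w} with hA'
    have hsub : A' ⊆ A := by
      rintro r ⟨x, w, ⟨hx, hw, h3, h4, h5, h6⟩, rfl⟩
      exact ⟨fun _ _ _ => 0, x, w, feas0 x w hx hw h3 h4 h5 h6,
        (obj0 x w hx).symm⟩
    have hbA : BddBelow A := by
      refine ⟨0, ?_⟩
      rintro r ⟨t, x, w, ⟨ht01, hx, hw, _⟩, rfl⟩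
      rw [objeq t x w hx]
      have := NHObj_nonneg hs hρ hΓ hdbar hdhat hx hw
      linarith [Hnonneg t ht01]
    have hbA' : BddBelow A' := hbA.mono hsub
    rcases Set.eq_empty_or_nonempty A' with hem | hne'
    · have hemA : A = ∅ := by
        rw [Set.eq_empty_iff_forall_notMem]
        rintro r ⟨t, x, w, ⟨ht01, hx, hw, _, _, h3, h4, h5, h6⟩, rfl⟩
        have : RONHWorstObj s ρ dbar dhat Γ₁ x w ∈ A' :=
          ⟨x, w, ⟨hx, hw, h3, h4, h5, h6⟩, rfl⟩
        rw [hem] at this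
        exact this
      rw [hemA, hem]
    · have hneA : A.Nonempty := hne'.mono hsub
      apply le_antisymm
      · exact csInf_le_csInf hbA hne' hsub
      · refine le_csInf hneA ?_
        rintro r ⟨t, x, w, ⟨ht01, hx, hw, _, _, h3, h4, h5, h6⟩, rfl⟩
        have hmem : RONHWorstObj s ρ dbar dhat Γ₁ x w ∈ A' :=
          ⟨x, w, ⟨hx, hw, h3, h4, h5, h6⟩, rfl⟩
        have h1 : sInf A' ≤ RONHWorstObj s ρ dbar dhat Γ₁ x w :=
          csInf_le hbA' hmem
        rw [objeq t x w hx]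
        linarith [Hnonneg t ht01]
end
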